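/- arXiv:2201.12631 — 9 statements merged into one kernel-verified Lean document; each statement's English description precedes it below -/
import Mathlib

section
/- Let A, Ω, B, Λ, C, Γ, D, Θ be block column vectors with entries in 𝒜 and zero first entry, let A₀, B₀, C₀, D₀ ∈ 𝒜, and set 𝐀 = T(A,Ω)+𝐀₀, 𝐁 = T(B,Λ)+𝐁₀, 𝐂 = T(C,Γ)+𝐂₀, 𝐃 = T(D,Θ)+𝐃₀. Then 𝐀𝐁 − 𝐂𝐃 is block Toeplitz if and only if AΛ* − Ω̃(B̃)* = CΘ* − Γ̃(D̃)* (an equality of n×n block matrices). -/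
open Matrix BigOperators

noncomputable section

/-- A block entry: a `d × d` complex matrix. -/
abbrev Blk (d : ℕ) := Matrix (Fin d) (Fin d) ℂ

/-- An `n × n` block matrix with `d × d` complex matrix entries. -/
abbrev BlkMat (n d : ℕ) := Matrix (Fin n) (Fin n) (Blk d)

/-- A block column vector: an `n × 1` column of `d × d` complex matrices. -/
abbrev BlkVec (n d : ℕ) := Fin n → Blk d

/-- The block shift `𝐒`: identity blocks on the subdiagonal, zero elsewhere. -/
def Smat (n d : ℕ) : BlkMat n d :=
  Matrix.of fun i j => if (i : ℕ) = (j : ℕ) + 1 then (1 : Blk d) else 0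

/-- `𝐒_X`: identity blocks on the subdiagonal, `X` in the corner entry `(1, n)`
(zero-based `(0, n-1)`), zero elsewhere. -/
def SX (n d : ℕ) (X : Blk d) : BlkMat n d :=
  Matrix.of fun i j =>
    if (i : ℕ) = (j : ℕ) + 1 then (1 : Blk d)
    else if (i : ℕ) = 0 ∧ (j : ℕ) = n - 1 then X else 0

/-- A block matrix is block Toeplitz when entries depend only on the difference of indices. -/
def IsBlockToeplitz {n d : ℕ} (A : BlkMat n d) : Prop :=
  ∀ i j i' j' : Fin n, (i : ℤ) - (j : ℤ) = (i' : ℤ) - (j' : ℤ) → A i j = A i' j'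

/-- `T(A, Ω)`: the block Toeplitz matrix with zero diagonal whose `(i,j)` entry is
`A_{i-j}` for `i > j` and `(Ω_{j-i})ᴴ` for `i < j`. -/
def Tmat {n d : ℕ} (A Ω : BlkVec n d) : BlkMat n d :=
  Matrix.of fun i j =>
    if (j : ℕ) < (i : ℕ) then
      A ⟨(i : ℕ) - (j : ℕ), (Nat.sub_le _ _).trans_lt i.isLt⟩
    else if (i : ℕ) < (j : ℕ) then
      (Ω ⟨(j : ℕ) - (i : ℕ), (Nat.sub_le _ _).trans_lt j.isLt⟩)ᴴ
    else 0

/-- `Ã`: the block column vector with `Ã_0 = 0` and `Ã_k = (A_{n-k})ᴴ` for `1 ≤ k ≤ n-1`. -/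
def tilde {n d : ℕ} (A : BlkVec n d) : BlkVec n d :=
  fun k =>
    if h : (k : ℕ) = 0 then 0
    else (A ⟨n - (k : ℕ),
      Nat.sub_lt ((Nat.zero_le _).trans_lt k.isLt) (Nat.pos_of_ne_zero h)⟩)ᴴ

/-- `U V*`: the `n × n` block matrix with `(i,j)` entry `U_i (V_j)ᴴ`. -/
def outer {n d : ℕ} (U V : BlkVec n d) : BlkMat n d :=
  Matrix.of fun i j => U i * (V j)ᴴ

/-- `v P₀`: the block matrix whose first block column is `v` and all other entries `0`. -/
def colTimesP0 {n d : ℕ} (v : BlkVec n d) : BlkMat n d :=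
  Matrix.of fun i j => if (j : ℕ) = 0 then v i else 0

/-- `P₀* w`: the block matrix whose first block row is `w` and all other entries `0`. -/
def P0starRow {n d : ℕ} (w : BlkVec n d) : BlkMat n d :=
  Matrix.of fun i j => if (i : ℕ) = 0 then w j else 0

/-- The block column vector with `M` in its first entry and `0` elsewhere. -/
def e0 {n d : ℕ} (M : Blk d) : BlkVec n d :=
  fun i => if (i : ℕ) = 0 then M else 0

/-!
For block Toeplitz `𝐀, 𝐁` the displacement `(𝐀𝐁)_{i+1,j+1} − (𝐀𝐁)_{i,j}` telescopes: all terms of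
the two sums cancel except `𝐀_{i+1,0} 𝐁_{0,j+1} − 𝐀_{i,n-1} 𝐁_{n-1,j}`, which is exactly the
`(i+1, j+1)` entry of `AΛ* − Ω̃(B̃)*`. A matrix is block Toeplitz iff its displacement vanishes, and
both sides of the claimed identity vanish in the first block row and column, so the two conditions
coincide.
-/

section Displacement
variable {α : Type*} {m : ℕ}

theorem Matrix.mul_succ_succ_sub_mul_castSucc_castSucc [NonUnitalNonAssocRing α]
    {P Q : Matrix (Fin (m + 1)) (Fin (m + 1)) α}
    (hP : ∀ i j : Fin m, P i.succ j.succ = P i.castSucc j.castSucc)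
    (hQ : ∀ i j : Fin m, Q i.succ j.succ = Q i.castSucc j.castSucc) (i j : Fin m) :
    (P * Q) i.succ j.succ - (P * Q) i.castSucc j.castSucc
      = P i.succ 0 * Q 0 j.succ - P i.castSucc (Fin.last m) * Q (Fin.last m) j.castSucc := by
  rw [mul_apply, mul_apply, Fin.sum_univ_succ, Fin.sum_univ_castSucc]
  simp only [hP, hQ]
  abel

theorem Matrix.eq_iff_succ_succ {M N : Matrix (Fin (m + 1)) (Fin (m + 1)) α}
    (hrow : ∀ j, M 0 j = N 0 j) (hcol : ∀ i, M i 0 = N i 0) :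
    M = N ↔ ∀ i j : Fin m, M i.succ j.succ = N i.succ j.succ := by
  refine ⟨fun h _ _ => h ▸ rfl, fun h => Matrix.ext fun i j => ?_⟩
  induction i using Fin.cases with
  | zero => exact hrow j
  | succ i =>
    induction j using Fin.cases with
    | zero => exact hcol _
    | succ j => exact h i j

end Displacement

section BlockToeplitz
variable {m d : ℕ}

theorem isBlockToeplitz_iff_succ_succ {M : BlkMat (m + 1) d} :
    IsBlockToeplitz M ↔ ∀ i j : Fin m, M i.succ j.succ = M i.castSucc j.castSucc := by
  refine ⟨fun h i j => h _ _ _ _ (by simp), fun h => ?_⟩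
  have shift : ∀ (k i j : ℕ) (hi : i + k < m + 1) (hj : j + k < m + 1),
      M ⟨i + k, hi⟩ ⟨j + k, hj⟩ = M ⟨i, by omega⟩ ⟨j, by omega⟩ := by
    intro k
    induction k with
    | zero => intros; rfl
    | succ k ih =>
      intro i j hi hj
      rw [← ih i j (by omega) (by omega)]
      exact h ⟨i + k, by omega⟩ ⟨j + k, by omega⟩
  intro i j i' j' hij
  wlog hii' : (i : ℕ) ≤ i' generalizing i j i' j'
  · exact (this i' j' i j hij.symm (by omega)).symm
  obtain ⟨k, hk⟩ := Nat.exists_eq_add_of_le hii'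
  have hjk : (j' : ℕ) = j + k := by omega
  have := shift k i j (hk ▸ i'.isLt) (hjk ▸ j'.isLt)
  simp only [← hk, ← hjk] at this
  exact this.symm

section Entries
variable {A Ω : BlkVec (m + 1) d} {A₀ : Blk d} {M : BlkMat (m + 1) d}

theorem succ_succ_of_eq_tmat_add_diagonal (hM : M = Tmat A Ω + diagonal fun _ => A₀)
    (i j : Fin m) : M i.succ j.succ = M i.castSucc j.castSucc := by
  subst hM
  simp only [Matrix.add_apply, Tmat, of_apply, Fin.val_succ, Fin.val_castSucc, diagonal_apply,
    Fin.succ_inj, Fin.castSucc_inj, Nat.add_lt_add_iff_right, Nat.add_sub_add_right]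

theorem succ_zero_of_eq_tmat_add_diagonal (hM : M = Tmat A Ω + diagonal fun _ => A₀)
    (i : Fin m) : M i.succ 0 = A i.succ := by
  simp [hM, Tmat]
  rfl

theorem zero_succ_of_eq_tmat_add_diagonal (hM : M = Tmat A Ω + diagonal fun _ => A₀)
    (j : Fin m) : M 0 j.succ = (Ω j.succ)ᴴ := by
  simp [hM, Tmat, diagonal_apply_ne _ (Fin.succ_ne_zero j).symm]
  rfl

theorem castSucc_last_of_eq_tmat_add_diagonal (hM : M = Tmat A Ω + diagonal fun _ => A₀)
    (i : Fin m) : M i.castSucc (Fin.last m) = tilde Ω i.succ := by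
  simp [hM, Tmat, tilde, (Fin.castSucc_lt_last i).not_gt]

theorem last_castSucc_of_eq_tmat_add_diagonal (hM : M = Tmat A Ω + diagonal fun _ => A₀)
    (j : Fin m) : M (Fin.last m) j.castSucc = (tilde A j.succ)ᴴ := by
  simp [hM, Tmat, tilde, diagonal_apply_ne _ (Fin.castSucc_lt_last j).ne']

end Entries

theorem mul_succ_succ_sub_of_eq_tmat_add_diagonal {A Ω B Λ : BlkVec (m + 1) d} {A₀ B₀ : Blk d}
    {P Q : BlkMat (m + 1) d} (hP : P = Tmat A Ω + diagonal fun _ => A₀)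
    (hQ : Q = Tmat B Λ + diagonal fun _ => B₀) (i j : Fin m) :
    (P * Q) i.succ j.succ - (P * Q) i.castSucc j.castSucc
      = (outer A Λ - outer (tilde Ω) (tilde B)) i.succ j.succ := by
  rw [mul_succ_succ_sub_mul_castSucc_castSucc (succ_succ_of_eq_tmat_add_diagonal hP)
      (succ_succ_of_eq_tmat_add_diagonal hQ), succ_zero_of_eq_tmat_add_diagonal hP,
    zero_succ_of_eq_tmat_add_diagonal hQ, castSucc_last_of_eq_tmat_add_diagonal hP,
    last_castSucc_of_eq_tmat_add_diagonal hQ]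
  rfl

theorem outer_sub_outer_tilde_zero_apply {A Λ Ω B : BlkVec (m + 1) d} (hA : A 0 = 0)
    (j : Fin (m + 1)) : (outer A Λ - outer (tilde Ω) (tilde B)) 0 j = 0 := by
  simp [outer, tilde, hA]

theorem outer_sub_outer_tilde_apply_zero {A Λ Ω B : BlkVec (m + 1) d} (hΛ : Λ 0 = 0)
    (i : Fin (m + 1)) : (outer A Λ - outer (tilde Ω) (tilde B)) i 0 = 0 := by
  simp [outer, tilde, hΛ]

end BlockToeplitz

theorem product_difference_toeplitz_iff_general (n d : ℕ) (hn : 0 < n)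
    (A Ω B Λ C Γ D Θ : BlkVec n d)
    (hA0 : A ⟨0, hn⟩ = 0) (hΛ0 : Λ ⟨0, hn⟩ = 0)
    (hC0 : C ⟨0, hn⟩ = 0) (hΘ0 : Θ ⟨0, hn⟩ = 0)
    (A₀ B₀ C₀ D₀ : Blk d)
    (Am Bm Cm Dm : BlkMat n d)
    (hAm : Am = Tmat A Ω + Matrix.diagonal (fun _ => A₀))
    (hBm : Bm = Tmat B Λ + Matrix.diagonal (fun _ => B₀))
    (hCm : Cm = Tmat C Γ + Matrix.diagonal (fun _ => C₀))
    (hDm : Dm = Tmat D Θ + Matrix.diagonal (fun _ => D₀)) :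
    IsBlockToeplitz (Am * Bm - Cm * Dm) ↔
      outer A Λ - outer (tilde Ω) (tilde B)
        = outer C Θ - outer (tilde Γ) (tilde D) := by
  obtain ⟨m, rfl⟩ : ∃ m, n = m + 1 := ⟨n - 1, by omega⟩
  have h0 : (⟨0, hn⟩ : Fin (m + 1)) = 0 := rfl
  rw [h0] at hA0 hΛ0 hC0 hΘ0
  rw [isBlockToeplitz_iff_succ_succ,
    eq_iff_succ_succ (fun j => by rw [outer_sub_outer_tilde_zero_apply hA0,
        outer_sub_outer_tilde_zero_apply hC0])
      (fun i => by rw [outer_sub_outer_tilde_apply_zero hΛ0,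
        outer_sub_outer_tilde_apply_zero hΘ0])]
  refine forall₂_congr fun i j => ?_
  rw [← sub_eq_zero, Matrix.sub_apply, Matrix.sub_apply, sub_sub_sub_comm,
    mul_succ_succ_sub_of_eq_tmat_add_diagonal hAm hBm,
    mul_succ_succ_sub_of_eq_tmat_add_diagonal hCm hDm, sub_eq_zero]

/-- `𝐀𝐁 − 𝐂𝐃` is block Toeplitz iff `AΛ* − Ω̃(B̃)* = CΘ* − Γ̃(D̃)*`. -/
theorem product_difference_toeplitz_iff (n d : ℕ) (hn : 0 < n) (hd : 0 < d)
    (𝒜 : Subalgebra ℂ (Blk d)) (hcomm : ∀ a ∈ 𝒜, ∀ b ∈ 𝒜, a * b = b * a)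
    (A Ω B Λ C Γ D Θ : BlkVec n d)
    (hAmem : ∀ i, A i ∈ 𝒜) (hΩmem : ∀ i, Ω i ∈ 𝒜)
    (hBmem : ∀ i, B i ∈ 𝒜) (hΛmem : ∀ i, Λ i ∈ 𝒜)
    (hCmem : ∀ i, C i ∈ 𝒜) (hΓmem : ∀ i, Γ i ∈ 𝒜)
    (hDmem : ∀ i, D i ∈ 𝒜) (hΘmem : ∀ i, Θ i ∈ 𝒜)
    (hA0 : A ⟨0, hn⟩ = 0) (hΩ0 : Ω ⟨0, hn⟩ = 0)
    (hB0 : B ⟨0, hn⟩ = 0) (hΛ0 : Λ ⟨0, hn⟩ = 0)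
    (hC0 : C ⟨0, hn⟩ = 0) (hΓ0 : Γ ⟨0, hn⟩ = 0)
    (hD0 : D ⟨0, hn⟩ = 0) (hΘ0 : Θ ⟨0, hn⟩ = 0)
    (A₀ B₀ C₀ D₀ : Blk d)
    (hA₀ : A₀ ∈ 𝒜) (hB₀ : B₀ ∈ 𝒜) (hC₀ : C₀ ∈ 𝒜) (hD₀ : D₀ ∈ 𝒜)
    (Am Bm Cm Dm : BlkMat n d)
    (hAm : Am = Tmat A Ω + Matrix.diagonal (fun _ => A₀))
    (hBm : Bm = Tmat B Λ + Matrix.diagonal (fun _ => B₀))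
    (hCm : Cm = Tmat C Γ + Matrix.diagonal (fun _ => C₀))
    (hDm : Dm = Tmat D Θ + Matrix.diagonal (fun _ => D₀)) :
    IsBlockToeplitz (Am * Bm - Cm * Dm) ↔
      outer A Λ - outer (tilde Ω) (tilde B)
        = outer C Θ - outer (tilde Γ) (tilde D) :=
  product_difference_toeplitz_iff_general n d hn A Ω B Λ C Γ D Θ hA0 hΛ0 hC0 hΘ0 A₀ B₀ C₀ D₀ Am Bm
    Cm Dm hAm hBm hCm hDm
end
end

section
/- Let A, Ω, B, Λ be block column vectors with entries in 𝒜 and zero first entry, let A₀, B₀ ∈ 𝒜, and set 𝐀 = T(A,Ω)+𝐀₀ and 𝐁 = T(B,Λ)+𝐁₀. Then the product 𝐀𝐁 is block Toeplitz if and only if AΛ* = Ω̃(B̃)* (an equality of n×n block matrices). -/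
open Matrix BigOperators

noncomputable section

/-- `𝐀𝐁` is block Toeplitz iff `AΛ* = Ω̃(B̃)*`. -/
theorem product_toeplitz_iff (n d : ℕ) (hn : 0 < n) (hd : 0 < d)
    (𝒜 : Subalgebra ℂ (Blk d)) (hcomm : ∀ a ∈ 𝒜, ∀ b ∈ 𝒜, a * b = b * a)
    (A Ω B Λ : BlkVec n d)
    (hAmem : ∀ i, A i ∈ 𝒜) (hΩmem : ∀ i, Ω i ∈ 𝒜)
    (hBmem : ∀ i, B i ∈ 𝒜) (hΛmem : ∀ i, Λ i ∈ 𝒜)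
    (hA0 : A ⟨0, hn⟩ = 0) (hΩ0 : Ω ⟨0, hn⟩ = 0)
    (hB0 : B ⟨0, hn⟩ = 0) (hΛ0 : Λ ⟨0, hn⟩ = 0)
    (A₀ B₀ : Blk d) (hA₀ : A₀ ∈ 𝒜) (hB₀ : B₀ ∈ 𝒜)
    (Am Bm : BlkMat n d)
    (hAm : Am = Tmat A Ω + Matrix.diagonal (fun _ => A₀))
    (hBm : Bm = Tmat B Λ + Matrix.diagonal (fun _ => B₀)) :
    IsBlockToeplitz (Am * Bm) ↔ outer A Λ = outer (tilde Ω) (tilde B) := by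
  obtain ⟨m, rfl⟩ : ∃ m, n = m + 1 := ⟨n - 1, by omega⟩
  -- Generic entry lemmas for `Tmat X Y + diagonal X₀`.
  have entry_low : ∀ (X Y : BlkVec (m+1) d) (X₀ : Blk d) (i j : Fin (m+1))
      (h : (j : ℕ) < (i : ℕ)),
      ((Tmat X Y + Matrix.diagonal fun _ => X₀ : BlkMat (m+1) d)) i j
        = X ⟨(i : ℕ) - (j : ℕ), by omega⟩ := by
    intro X Y X₀ i j h
    have hne : i ≠ j := Fin.ne_of_val_ne (by omega)
    rw [Matrix.add_apply, Matrix.diagonal_apply_ne _ hne, add_zero]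
    show (if (j : ℕ) < (i : ℕ) then _ else _) = _
    rw [if_pos h]
  have entry_high : ∀ (X Y : BlkVec (m+1) d) (X₀ : Blk d) (i j : Fin (m+1))
      (h : (i : ℕ) < (j : ℕ)),
      ((Tmat X Y + Matrix.diagonal fun _ => X₀ : BlkMat (m+1) d)) i j
        = (Y ⟨(j : ℕ) - (i : ℕ), by omega⟩)ᴴ := by
    intro X Y X₀ i j h
    have hne : i ≠ j := Fin.ne_of_val_ne (by omega)
    rw [Matrix.add_apply, Matrix.diagonal_apply_ne _ hne, add_zero]
    show (if (j : ℕ) < (i : ℕ) then _ else if (i : ℕ) < (j : ℕ) then _ else _) = _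
    rw [if_neg (by omega), if_pos h]
  have entry_diag : ∀ (X Y : BlkVec (m+1) d) (X₀ : Blk d) (i : Fin (m+1)),
      ((Tmat X Y + Matrix.diagonal fun _ => X₀ : BlkMat (m+1) d)) i i = X₀ := by
    intro X Y X₀ i
    rw [Matrix.add_apply, Matrix.diagonal_apply_eq]
    show (if (i : ℕ) < (i : ℕ) then _ else if (i : ℕ) < (i : ℕ) then _ else _) + _ = _
    rw [if_neg (by omega), if_neg (by omega), zero_add]
  -- Shift invariance of the entries.
  have shiftE : ∀ (X Y : BlkVec (m+1) d) (X₀ : Blk d) (i j : ℕ)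
      (hi : i < m) (hj : j < m),
      ((Tmat X Y + Matrix.diagonal fun _ => X₀ : BlkMat (m+1) d)) ⟨i+1, by omega⟩ ⟨j+1, by omega⟩
        = ((Tmat X Y + Matrix.diagonal fun _ => X₀ : BlkMat (m+1) d)) ⟨i, by omega⟩ ⟨j, by omega⟩ := by
    intro X Y X₀ i j hi hj
    rcases lt_trichotomy i j with h | h | h
    · rw [entry_high X Y X₀ _ _ (show i + 1 < j + 1 by omega),
        entry_high X Y X₀ _ _ (show i < j from h)]
      exact congrArg (fun z => (Y z)ᴴ)
        (Fin.mk_eq_mk.mpr (show j + 1 - (i + 1) = j - i by omega))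
    · subst h
      rw [entry_diag, entry_diag]
    · rw [entry_low X Y X₀ _ _ (show j + 1 < i + 1 by omega),
        entry_low X Y X₀ _ _ (show j < i from h)]
      exact congrArg X (Fin.mk_eq_mk.mpr (show i + 1 - (j + 1) = i - j by omega))
  subst hAm hBm
  set Amm := Tmat A Ω + Matrix.diagonal (fun _ : Fin (m+1) => A₀) with hAmm
  set Bmm := Tmat B Λ + Matrix.diagonal (fun _ : Fin (m+1) => B₀) with hBmm
  -- the key shift identity for the product
  have key : ∀ (i j : ℕ) (hi : i < m) (hj : j < m),
      (Amm * Bmm) ⟨i+1, by omega⟩ ⟨j+1, by omega⟩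
          + (Ω ⟨m - i, by omega⟩)ᴴ * B ⟨m - j, by omega⟩
        = (Amm * Bmm) ⟨i, by omega⟩ ⟨j, by omega⟩
          + A ⟨i+1, by omega⟩ * (Λ ⟨j+1, by omega⟩)ᴴ := by
    intro i j hi hj
    rw [Matrix.mul_apply, Matrix.mul_apply, Fin.sum_univ_succ, Fin.sum_univ_castSucc]
    have hsum : (∑ k : Fin m, Amm ⟨i+1, by omega⟩ (Fin.succ k)
          * Bmm (Fin.succ k) ⟨j+1, by omega⟩)
        = ∑ k : Fin m, Amm ⟨i, by omega⟩ (Fin.castSucc k)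
          * Bmm (Fin.castSucc k) ⟨j, by omega⟩ := by
      refine Finset.sum_congr rfl fun k _ => ?_
      exact congrArg₂ (· * ·) (shiftE A Ω A₀ i k hi k.isLt) (shiftE B Λ B₀ k j k.isLt hj)
    rw [hsum]
    have h1 : Amm ⟨i+1, by omega⟩ (0 : Fin (m+1)) = A ⟨i+1, by omega⟩ :=
      entry_low A Ω A₀ _ _ (by simp)
    have h2 : Bmm (0 : Fin (m+1)) ⟨j+1, by omega⟩ = (Λ ⟨j+1, by omega⟩)ᴴ :=
      entry_high B Λ B₀ _ _ (by simp)
    have h3 : Amm ⟨i, by omega⟩ (Fin.last m) = (Ω ⟨m - i, by omega⟩)ᴴ :=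
      entry_high A Ω A₀ _ _ (by simpa using hi)
    have h4 : Bmm (Fin.last m) ⟨j, by omega⟩ = B ⟨m - j, by omega⟩ :=
      entry_low B Λ B₀ _ _ (by simpa using hj)
    rw [h1, h2, h3, h4]
    abel
  constructor
  · -- Toeplitz ⇒ outer equality
    intro T
    have Hstep : ∀ (i j : ℕ) (hi : i < m) (hj : j < m),
        (Ω ⟨m - i, by omega⟩)ᴴ * B ⟨m - j, by omega⟩
          = A ⟨i+1, by omega⟩ * (Λ ⟨j+1, by omega⟩)ᴴ := by
      intro i j hi hj
      have hT : (Amm * Bmm) ⟨i+1, by omega⟩ ⟨j+1, by omega⟩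
          = (Amm * Bmm) ⟨i, by omega⟩ ⟨j, by omega⟩ :=
        T _ _ _ _ (by push_cast; ring)
      have := key i j hi hj
      rw [hT] at this
      exact add_left_cancel this
    refine Matrix.ext fun i j => ?_
    show A i * (Λ j)ᴴ = tilde Ω i * (tilde B j)ᴴ
    by_cases hi0 : (i : ℕ) = 0
    · have : A i = 0 := by
        have : i = ⟨0, Nat.succ_pos m⟩ := Fin.ext hi0
        rw [this]; exact hA0
      rw [this, zero_mul, tilde, dif_pos hi0, zero_mul]
    · by_cases hj0 : (j : ℕ) = 0
      · have : Λ j = 0 := by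
          have : j = ⟨0, Nat.succ_pos m⟩ := Fin.ext hj0
          rw [this]; exact hΛ0
        rw [this, conjTranspose_zero, mul_zero, tilde, tilde, dif_pos hj0,
          conjTranspose_zero, mul_zero]
      · have hi1 : 1 ≤ (i : ℕ) := Nat.one_le_iff_ne_zero.mpr hi0
        have hj1 : 1 ≤ (j : ℕ) := Nat.one_le_iff_ne_zero.mpr hj0
        have h := Hstep ((i : ℕ) - 1) ((j : ℕ) - 1) (by omega) (by omega)
        rw [tilde, tilde, dif_neg hi0, dif_neg hj0, conjTranspose_conjTranspose]
        have ei : A ⟨(i : ℕ) - 1 + 1, by omega⟩ = A i :=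
          congrArg A (Fin.ext (by show (i:ℕ) - 1 + 1 = (i:ℕ); omega))
        have ej : Λ ⟨(j : ℕ) - 1 + 1, by omega⟩ = Λ j :=
          congrArg Λ (Fin.ext (by show (j:ℕ) - 1 + 1 = (j:ℕ); omega))
        have eΩ : Ω ⟨m - ((i : ℕ) - 1), by omega⟩
            = Ω ⟨m + 1 - (i : ℕ), by omega⟩ :=
          congrArg Ω (Fin.ext (by show m - ((i:ℕ)-1) = m + 1 - (i:ℕ); omega))
        have eB : B ⟨m - ((j : ℕ) - 1), by omega⟩
            = B ⟨m + 1 - (j : ℕ), by omega⟩ :=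
          congrArg B (Fin.ext (by show m - ((j:ℕ)-1) = m + 1 - (j:ℕ); omega))
        rw [ei, ej, eΩ, eB] at h
        exact h.symm
  · -- outer equality ⇒ Toeplitz
    intro H
    have Hstep : ∀ (i j : ℕ) (hi : i < m) (hj : j < m),
        (Amm * Bmm) ⟨i+1, by omega⟩ ⟨j+1, by omega⟩
          = (Amm * Bmm) ⟨i, by omega⟩ ⟨j, by omega⟩ := by
      intro i j hi hj
      have hout : A ⟨i+1, by omega⟩ * (Λ ⟨j+1, by omega⟩)ᴴ
          = (Ω ⟨m - i, by omega⟩)ᴴ * B ⟨m - j, by omega⟩ := by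
        have h := congrFun (congrFun H ⟨i+1, by omega⟩) ⟨j+1, by omega⟩
        have hL : outer A Λ ⟨i+1, by omega⟩ ⟨j+1, by omega⟩
            = A ⟨i+1, by omega⟩ * (Λ ⟨j+1, by omega⟩)ᴴ := rfl
        have hR : outer (tilde Ω) (tilde B) ⟨i+1, by omega⟩ ⟨j+1, by omega⟩
            = (Ω ⟨m - i, by omega⟩)ᴴ * B ⟨m - j, by omega⟩ := by
          show tilde Ω ⟨i+1, by omega⟩ * (tilde B ⟨j+1, by omega⟩)ᴴ = _
          rw [tilde, tilde, dif_neg (by omega : ¬ (i+1) = 0),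
            dif_neg (by omega : ¬ (j+1) = 0), conjTranspose_conjTranspose]
          have e1 : Ω ⟨m + 1 - (i+1), by omega⟩ = Ω ⟨m - i, by omega⟩ :=
            congrArg Ω (Fin.ext (by show m + 1 - (i+1) = m - i; omega))
          have e2 : B ⟨m + 1 - (j+1), by omega⟩ = B ⟨m - j, by omega⟩ :=
            congrArg B (Fin.ext (by show m + 1 - (j+1) = m - j; omega))
          rw [e1, e2]
        rw [hL, hR] at h
        exact h
      have := key i j hi hj
      rw [← hout] at this
      exact add_right_cancel this
    have chain : ∀ (t i j : ℕ) (hi : i + t < m + 1) (hj : j + t < m + 1),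
        (Amm * Bmm) ⟨i + t, hi⟩ ⟨j + t, hj⟩
          = (Amm * Bmm) ⟨i, by omega⟩ ⟨j, by omega⟩ := by
      intro t
      induction t with
      | zero => intro i j hi hj; rfl
      | succ t ih =>
        intro i j hi hj
        have h1 : (Amm * Bmm) ⟨i + (t+1), hi⟩ ⟨j + (t+1), hj⟩
            = (Amm * Bmm) ⟨i + t, by omega⟩ ⟨j + t, by omega⟩ :=
          Hstep (i + t) (j + t) (by omega) (by omega)
        exact h1.trans (ih i j (by omega) (by omega))
    intro i j i' j' h
    rcases le_total (i : ℕ) (i' : ℕ) with hle | hle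
    · have key2 := chain ((i' : ℕ) - (i : ℕ)) (i : ℕ) (j : ℕ) (by omega) (by omega)
      have e1 : i' = (⟨(i : ℕ) + ((i' : ℕ) - (i : ℕ)), by omega⟩ : Fin (m+1)) :=
        Fin.ext (show (i' : ℕ) = (i : ℕ) + ((i' : ℕ) - (i : ℕ)) by omega)
      have e2 : j' = (⟨(j : ℕ) + ((i' : ℕ) - (i : ℕ)), by omega⟩ : Fin (m+1)) :=
        Fin.ext (show (j' : ℕ) = (j : ℕ) + ((i' : ℕ) - (i : ℕ)) by omega)
      exact key2.symm.trans (congrArg₂ (fun a b => (Amm * Bmm) a b) e1.symm e2.symm)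
    · have key2 := chain ((i : ℕ) - (i' : ℕ)) (i' : ℕ) (j' : ℕ) (by omega) (by omega)
      have e1 : i = (⟨(i' : ℕ) + ((i : ℕ) - (i' : ℕ)), by omega⟩ : Fin (m+1)) :=
        Fin.ext (show (i : ℕ) = (i' : ℕ) + ((i : ℕ) - (i' : ℕ)) by omega)
      have e2 : j = (⟨(j' : ℕ) + ((i : ℕ) - (i' : ℕ)), by omega⟩ : Fin (m+1)) :=
        Fin.ext (show (j : ℕ) = (j' : ℕ) + ((i : ℕ) - (i' : ℕ)) by omega)
      exact (congrArg₂ (fun a b => (Amm * Bmm) a b) e1 e2).trans key2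
end
end

section
/- Let 𝐀 and 𝐁 be block Toeplitz matrices all of whose entries lie in 𝒜. Then the product 𝐀𝐁 is block Toeplitz if and only if the product 𝐁𝐀 is block Toeplitz. -/
open Matrix BigOperators

noncomputable section

lemma chain_step {n d : ℕ} (M : BlkMat n d)
    (h : ∀ (i j : ℕ) (hi : i + 1 < n) (hj : j + 1 < n),
      M ⟨i+1, hi⟩ ⟨j+1, hj⟩ = M ⟨i, by omega⟩ ⟨j, by omega⟩) :
    ∀ (t i j : ℕ) (hi : i + t < n) (hj : j + t < n),
      M ⟨i+t, hi⟩ ⟨j+t, hj⟩ = M ⟨i, by omega⟩ ⟨j, by omega⟩ := by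
  intro t
  induction t with
  | zero => intro i j hi hj; rfl
  | succ t ih =>
    intro i j hi hj
    have h1 : M ⟨i+(t+1), hi⟩ ⟨j+(t+1), hj⟩ = M ⟨i+t, by omega⟩ ⟨j+t, by omega⟩ := by
      have := h (i+t) (j+t) (by omega) (by omega)
      convert this using 3 <;> omega
    rw [h1, ih i j (by omega) (by omega)]

lemma isBlockToeplitz_iff_step {n d : ℕ} (M : BlkMat n d) :
    IsBlockToeplitz M ↔ ∀ (i j : ℕ) (hi : i + 1 < n) (hj : j + 1 < n),
      M ⟨i+1, hi⟩ ⟨j+1, hj⟩ = M ⟨i, by omega⟩ ⟨j, by omega⟩ := by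
  constructor
  · intro hM i j hi hj
    exact hM _ _ _ _ (by simp only [Fin.val_mk, Fin.val_zero, Fin.val_last, Fin.val_succ, Fin.coe_castSucc]; omega)
  · intro h i j i' j' hij
    rcases le_or_gt i.1 i'.1 with hle | hlt
    · obtain ⟨t, ht⟩ : ∃ t, i'.1 = i.1 + t := ⟨i'.1 - i.1, by omega⟩
      have hj' : j'.1 = j.1 + t := by omega
      have hb1 : i.1 + t < n := by have := i'.isLt; omega
      have hb2 : j.1 + t < n := by have := j'.isLt; omega
      have e1 : i' = ⟨i.1 + t, hb1⟩ := Fin.ext ht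
      have e2 : j' = ⟨j.1 + t, hb2⟩ := Fin.ext hj'
      rw [e1, e2]
      exact (chain_step M h t i.1 j.1 hb1 hb2).symm
    · obtain ⟨t, ht⟩ : ∃ t, i.1 = i'.1 + t := ⟨i.1 - i'.1, by omega⟩
      have hj' : j.1 = j'.1 + t := by omega
      have hb1 : i'.1 + t < n := by have := i.isLt; omega
      have hb2 : j'.1 + t < n := by have := j.isLt; omega
      have e1 : i = ⟨i'.1 + t, hb1⟩ := Fin.ext ht
      have e2 : j = ⟨j'.1 + t, hb2⟩ := Fin.ext hj'
      rw [e1, e2]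
      exact chain_step M h t i'.1 j'.1 hb1 hb2

lemma step_iff_cond {m d : ℕ} (A B : BlkMat (m+1) d)
    (hA : IsBlockToeplitz A) (hB : IsBlockToeplitz B)
    (i j : ℕ) (hi : i < m) (hj : j < m) :
    (A * B) ⟨i+1, by omega⟩ ⟨j+1, by omega⟩ = (A * B) ⟨i, by omega⟩ ⟨j, by omega⟩ ↔
      A ⟨i+1, by omega⟩ 0 * B 0 ⟨j+1, by omega⟩
        = A ⟨i, by omega⟩ (Fin.last m) * B (Fin.last m) ⟨j, by omega⟩ := by
  rw [Matrix.mul_apply, Matrix.mul_apply, Fin.sum_univ_succ, Fin.sum_univ_castSucc]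
  have hsum : ∀ k : Fin m,
      A ⟨i+1, by omega⟩ (Fin.succ k) * B (Fin.succ k) ⟨j+1, by omega⟩
        = A ⟨i, by omega⟩ (Fin.castSucc k) * B (Fin.castSucc k) ⟨j, by omega⟩ := by
    intro k
    rw [hA ⟨i+1, by omega⟩ (Fin.succ k) ⟨i, by omega⟩ (Fin.castSucc k) (by simp only [Fin.val_mk, Fin.val_zero, Fin.val_last, Fin.val_succ, Fin.coe_castSucc]; omega),
        hB (Fin.succ k) ⟨j+1, by omega⟩ (Fin.castSucc k) ⟨j, by omega⟩ (by simp only [Fin.val_mk, Fin.val_zero, Fin.val_last, Fin.val_succ, Fin.coe_castSucc]; omega)]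
  rw [Finset.sum_congr rfl (fun k _ => hsum k), add_comm]
  exact add_right_inj _

lemma key_dir {m d : ℕ} (A B : BlkMat (m+1) d)
    (hc : ∀ i j i' j', A i j * B i' j' = B i' j' * A i j)
    (hA : IsBlockToeplitz A) (hB : IsBlockToeplitz B)
    (h : IsBlockToeplitz (B * A)) : IsBlockToeplitz (A * B) := by
  rw [isBlockToeplitz_iff_step] at h ⊢
  intro i j hi hj
  have hi' : i < m := by omega
  have hj' : j < m := by omega
  rw [step_iff_cond A B hA hB i j hi' hj']
  have hBA := (step_iff_cond B A hB hA (m-1-j) (m-1-i) (by omega) (by omega)).mp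
    (h (m-1-j) (m-1-i) (by omega) (by omega))
  -- hBA : B ⟨m-j⟩ 0 * A 0 ⟨m-i⟩ = B ⟨m-1-j⟩ (last m) * A (last m) ⟨m-1-i⟩
  have eA1 : A ⟨i+1, by omega⟩ 0 = A (Fin.last m) ⟨m-1-i, by omega⟩ :=
    hA _ _ _ _ (by simp only [Fin.val_mk, Fin.val_zero, Fin.val_last, Fin.val_succ, Fin.coe_castSucc]; omega)
  have eB1 : B 0 ⟨j+1, by omega⟩ = B ⟨m-1-j, by omega⟩ (Fin.last m) :=
    hB _ _ _ _ (by simp only [Fin.val_mk, Fin.val_zero, Fin.val_last, Fin.val_succ, Fin.coe_castSucc]; omega)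
  have eA2 : A ⟨i, by omega⟩ (Fin.last m) = A 0 ⟨m-1-i+1, by omega⟩ :=
    hA _ _ _ _ (by simp only [Fin.val_mk, Fin.val_zero, Fin.val_last, Fin.val_succ, Fin.coe_castSucc]; omega)
  have eB2 : B (Fin.last m) ⟨j, by omega⟩ = B ⟨m-1-j+1, by omega⟩ 0 :=
    hB _ _ _ _ (by simp only [Fin.val_mk, Fin.val_zero, Fin.val_last, Fin.val_succ, Fin.coe_castSucc]; omega)
  rw [eA1, eB1, eA2, eB2]
  calc A (Fin.last m) ⟨m-1-i, by omega⟩ * B ⟨m-1-j, by omega⟩ (Fin.last m)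
      = B ⟨m-1-j, by omega⟩ (Fin.last m) * A (Fin.last m) ⟨m-1-i, by omega⟩ := hc _ _ _ _
    _ = B ⟨m-1-j+1, by omega⟩ 0 * A 0 ⟨m-1-i+1, by omega⟩ := hBA.symm
    _ = A 0 ⟨m-1-i+1, by omega⟩ * B ⟨m-1-j+1, by omega⟩ 0 := (hc _ _ _ _).symm

/-- For block Toeplitz matrices with entries in `𝒜`, `𝐀𝐁` is block Toeplitz iff
`𝐁𝐀` is block Toeplitz. -/
theorem toeplitz_product_comm_iff (n d : ℕ) (hn : 0 < n) (hd : 0 < d)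
    (𝒜 : Subalgebra ℂ (Blk d)) (hcomm : ∀ a ∈ 𝒜, ∀ b ∈ 𝒜, a * b = b * a)
    (A B : BlkMat n d)
    (hAmem : ∀ i j, A i j ∈ 𝒜) (hBmem : ∀ i j, B i j ∈ 𝒜)
    (hA : IsBlockToeplitz A) (hB : IsBlockToeplitz B) :
    IsBlockToeplitz (A * B) ↔ IsBlockToeplitz (B * A) := by
  obtain ⟨m, rfl⟩ : ∃ m, n = m + 1 := ⟨n - 1, by omega⟩
  have hcAB : ∀ i j i' j', A i j * B i' j' = B i' j' * A i j :=
    fun i j i' j' => hcomm _ (hAmem i j) _ (hBmem i' j')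
  have hcBA : ∀ i j i' j', B i j * A i' j' = A i' j' * B i j :=
    fun i j i' j' => hcomm _ (hBmem i j) _ (hAmem i' j')
  exact ⟨fun h => key_dir B A hcBA hB hA h, fun h => key_dir A B hcAB hA hB h⟩
end
end

section
/- Let 𝐀 and 𝐁 be block Toeplitz matrices all of whose entries lie in 𝒜. If the product 𝐀𝐁 is block Toeplitz, then 𝐀 and 𝐁 commute: 𝐀𝐁 = 𝐁𝐀. -/
open Matrix BigOperators

noncomputable section

/-! ### Auxiliary lemmas for the proof -/

open Finset

lemma myFinSum {M : Type*} [AddCommMonoid M] {n : ℕ} (f : ℤ → M) :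
    ∑ k : Fin n, f k = ∑ m ∈ Finset.Ioc (-1 : ℤ) ((n : ℤ) - 1), f m := by
  refine Finset.sum_bij' (i := fun (k : Fin n) _ => (k : ℤ))
    (j := fun (m : ℤ) hm => (⟨m.toNat, by simp only [Finset.mem_Ioc] at hm; omega⟩ : Fin n))
    ?_ ?_ ?_ ?_ ?_
  · intro k _; simp only [Finset.mem_Ioc]; have := k.isLt; omega
  · intro m _; simp
  · intro k _; ext; simp
  · intro m hm; simp only [Finset.mem_Ioc] at hm; simp; omega
  · intro k _; rfl

lemma mySplit {M : Type*} [AddCommMonoid M] (f : ℤ → M) {a b c : ℤ} (h1 : a ≤ b) (h2 : b ≤ c) :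
    ∑ m ∈ Finset.Ioc a c, f m = (∑ m ∈ Finset.Ioc a b, f m) + ∑ m ∈ Finset.Ioc b c, f m := by
  rw [← Finset.Ioc_union_Ioc_eq_Ioc h1 h2, Finset.sum_union]
  rw [Finset.disjoint_left]
  intro x hx hy
  simp only [Finset.mem_Ioc] at hx hy
  omega

lemma myShift {M : Type*} [AddCommMonoid M] (f : ℤ → M) (u v t : ℤ) :
    ∑ m ∈ Finset.Ioc (u + t) (v + t), f m = ∑ m ∈ Finset.Ioc u v, f (m + t) := by
  rw [← Finset.map_add_right_Ioc, Finset.sum_map]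
  rfl

lemma mySingleton {M : Type*} [AddCommMonoid M] (f : ℤ → M) (a : ℤ) :
    ∑ m ∈ Finset.Ioc (a - 1) a, f m = f a := by
  have h : Finset.Ioc (a - 1) a = {a} := by
    ext x; simp only [Finset.mem_Ioc, Finset.mem_singleton]; omega
  rw [h, Finset.sum_singleton]

def entF {n d : ℕ} (A : BlkMat n d) : ℤ → Blk d := fun s =>
  if h : ∃ p : Fin n × Fin n, (p.1 : ℤ) - (p.2 : ℤ) = s then A h.choose.1 h.choose.2 else 0

lemma entF_eq {n d : ℕ} {A : BlkMat n d} (hA : IsBlockToeplitz A) (i j : Fin n) :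
    A i j = entF A ((i : ℤ) - (j : ℤ)) := by
  have h : ∃ p : Fin n × Fin n, (p.1 : ℤ) - (p.2 : ℤ) = (i : ℤ) - (j : ℤ) := ⟨(i, j), rfl⟩
  rw [entF, dif_pos h]
  exact hA i j _ _ h.choose_spec.symm

lemma entF_mem {n d : ℕ} {A : BlkMat n d} {𝒜 : Subalgebra ℂ (Blk d)}
    (hm : ∀ i j, A i j ∈ 𝒜) (s : ℤ) : entF A s ∈ 𝒜 := by
  rw [entF]
  split
  · exact hm _ _
  · exact zero_mem _


attribute [irreducible] entF
lemma mulEntry {n d : ℕ} {A B : BlkMat n d}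
    (hA : IsBlockToeplitz A) (hB : IsBlockToeplitz B) (i j : Fin n) :
    (A * B) i j = ∑ m ∈ Finset.Ioc (-1 : ℤ) ((n : ℤ) - 1),
      entF A ((i : ℤ) - m) * entF B (m - (j : ℤ)) := by
  rw [Matrix.mul_apply, ← myFinSum (f := fun m => entF A ((i : ℤ) - m) * entF B (m - (j : ℤ)))]
  exact Finset.sum_congr rfl fun k _ => by rw [← entF_eq hA, ← entF_eq hB]

lemma core {R : Type*} [Ring R] (n : ℕ) (hn : 0 < n) (a b : ℤ → R)
    (hc : ∀ s t, a s * b t = b t * a s)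
    (hstar : ∀ p q : ℤ, 1 ≤ p → p ≤ (n : ℤ) - 1 → 1 ≤ q → q ≤ (n : ℤ) - 1 →
      a p * b (-q) = a (p - n) * b (n - q))
    (i j : ℤ) (hi0 : 0 ≤ i) (hi : i ≤ (n : ℤ) - 1) (hj0 : 0 ≤ j) (hj : j ≤ (n : ℤ) - 1) :
    ∑ m ∈ Finset.Ioc (-1 : ℤ) ((n : ℤ) - 1), b (i - m) * a (m - j)
      = ∑ m ∈ Finset.Ioc (-1 : ℤ) ((n : ℤ) - 1), a (i - m) * b (m - j) := by
  set N : ℤ := (n : ℤ) with hN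
  set g : ℤ → R := fun m => a (i - m) * b (m - j) with hg
  have hpair : ∀ m : ℤ, i + 1 ≤ m → m ≤ i + N - 1 → j + 1 ≤ m → m ≤ j + N - 1 →
      g m = g (m - N) := by
    intro m h1 h2 h3 h4
    have hs := hstar (i - m + N) (N + j - m) (by omega) (by omega) (by omega) (by omega)
    rw [show -(N + j - m) = m - j - N by ring, show i - m + N - N = i - m by ring,
      show N - (N + j - m) = m - j by ring] at hs
    simp only [hg]
    rw [show i - (m - N) = i - m + N by ring, show m - N - j = m - j - N by ring]
    exact hs.symm
  have step1 : ∑ m ∈ Finset.Ioc (-1 : ℤ) (N - 1), b (i - m) * a (m - j)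
      = ∑ m ∈ Finset.Ioc (i + j - N) (i + j), g m := by
    rw [show (∑ m ∈ Finset.Ioc (-1 : ℤ) (N - 1), b (i - m) * a (m - j))
        = ∑ m ∈ Finset.Ioc (-1 : ℤ) (N - 1), a (m - j) * b (i - m) from
      Finset.sum_congr rfl fun m _ => (hc _ _).symm]
    refine Finset.sum_bij' (i := fun m _ => i + j - m) (j := fun m _ => i + j - m)
      ?_ ?_ ?_ ?_ ?_
    · intro m hm; simp only [Finset.mem_Ioc] at hm ⊢; omega
    · intro m hm; simp only [Finset.mem_Ioc] at hm ⊢; omega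
    · intro m _; omega
    · intro m _; omega
    · intro m _
      simp only [hg]
      rw [show i - (i + j - m) = m - j by ring, show i + j - m - j = i - m by ring]
  rw [step1]
  rcases le_or_gt (i + j) (N - 1) with hc1 | hc1
  · have s1 : ∑ m ∈ Finset.Ioc (i + j - N) (i + j), g m
        = (∑ m ∈ Finset.Ioc (i + j - N) (-1 : ℤ), g m) + ∑ m ∈ Finset.Ioc (-1 : ℤ) (i + j), g m :=
      mySplit g (by omega) (by omega)
    have s2 : ∑ m ∈ Finset.Ioc (-1 : ℤ) (N - 1), g m
        = (∑ m ∈ Finset.Ioc (-1 : ℤ) (i + j), g m) + ∑ m ∈ Finset.Ioc (i + j) (N - 1), g m :=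
      mySplit g (by omega) (by omega)
    have s3 : ∑ m ∈ Finset.Ioc (i + j - N) (-1 : ℤ), g m
        = ∑ m ∈ Finset.Ioc (i + j) (N - 1), g m := by
      have sh := myShift g (i + j) (N - 1) (-N)
      rw [show i + j + -N = i + j - N by ring, show N - 1 + -N = (-1 : ℤ) by ring] at sh
      rw [sh]
      refine Finset.sum_congr rfl fun m hm => ?_
      simp only [Finset.mem_Ioc] at hm
      rw [show m + -N = m - N by ring]
      exact (hpair m (by omega) (by omega) (by omega) (by omega)).symm
    rw [s1, s2, s3, add_comm]
  · have s1 : ∑ m ∈ Finset.Ioc (i + j - N) (i + j), g m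
        = (∑ m ∈ Finset.Ioc (i + j - N) (N - 1), g m) + ∑ m ∈ Finset.Ioc (N - 1) (i + j), g m :=
      mySplit g (by omega) (by omega)
    have s2 : ∑ m ∈ Finset.Ioc (-1 : ℤ) (N - 1), g m
        = (∑ m ∈ Finset.Ioc (-1 : ℤ) (i + j - N), g m) + ∑ m ∈ Finset.Ioc (i + j - N) (N - 1), g m :=
      mySplit g (by omega) (by omega)
    have s3 : ∑ m ∈ Finset.Ioc (N - 1 : ℤ) (i + j), g m
        = ∑ m ∈ Finset.Ioc (-1 : ℤ) (i + j - N), g m := by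
      have sh := myShift g (-1) (i + j - N) N
      rw [show (-1 : ℤ) + N = N - 1 by ring, show i + j - N + N = i + j by ring] at sh
      rw [sh]
      refine Finset.sum_congr rfl fun m hm => ?_
      simp only [Finset.mem_Ioc] at hm
      have h := hpair (m + N) (by omega) (by omega) (by omega) (by omega)
      rw [show m + N - N = m by ring] at h
      exact h
    rw [s1, s2, s3, add_comm]

/-- For block Toeplitz matrices with entries in `𝒜`, if `𝐀𝐁` is block Toeplitz
then `𝐀𝐁 = 𝐁𝐀`. -/
theorem toeplitz_product_commutes (n d : ℕ) (hn : 0 < n) (hd : 0 < d)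
    (𝒜 : Subalgebra ℂ (Blk d)) (hcomm : ∀ a ∈ 𝒜, ∀ b ∈ 𝒜, a * b = b * a)
    (A B : BlkMat n d)
    (hAmem : ∀ i j, A i j ∈ 𝒜) (hBmem : ∀ i j, B i j ∈ 𝒜)
    (hA : IsBlockToeplitz A) (hB : IsBlockToeplitz B)
    (hAB : IsBlockToeplitz (A * B)) :
    A * B = B * A := by
  set a : ℤ → Blk d := entF A with ha
  set b : ℤ → Blk d := entF B with hb
  have hc : ∀ s t : ℤ, a s * b t = b t * a s := fun s t =>
    hcomm _ (entF_mem hAmem s) _ (entF_mem hBmem t)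
  have hstar : ∀ p q : ℤ, 1 ≤ p → p ≤ (n : ℤ) - 1 → 1 ≤ q → q ≤ (n : ℤ) - 1 →
      a p * b (-q) = a (p - n) * b (n - q) := by
    intro p q hp1 hp2 hq1 hq2
    have hpn : p.toNat < n := by omega
    have hqn : q.toNat < n := by omega
    have hpn' : (p - 1).toNat < n := by omega
    have hqn' : (q - 1).toNat < n := by omega
    have heq := hAB ⟨p.toNat, hpn⟩ ⟨q.toNat, hqn⟩ ⟨(p - 1).toNat, hpn'⟩ ⟨(q - 1).toNat, hqn'⟩
      (by simp only [Fin.val_mk]; omega)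
    rw [mulEntry hA hB, mulEntry hA hB] at heq
    simp only [Fin.val_mk] at heq
    rw [show ((p.toNat : ℕ) : ℤ) = p by omega, show ((q.toNat : ℕ) : ℤ) = q by omega,
      show (((p - 1).toNat : ℕ) : ℤ) = p - 1 by omega,
      show (((q - 1).toNat : ℕ) : ℤ) = q - 1 by omega] at heq
    set f : ℤ → Blk d := fun m => a (p - m) * b (m - q) with hf
    have hL : ∑ m ∈ Finset.Ioc (-1 : ℤ) ((n : ℤ) - 1), a (p - m) * b (m - q)
        = f 0 + ∑ m ∈ Finset.Ioc (0 : ℤ) ((n : ℤ) - 1), f m := by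
      rw [mySplit f (a := -1) (b := 0) (by omega) (by omega)]
      congr 1
      have h0 := mySingleton f 0
      rw [show (0 : ℤ) - 1 = -1 by ring] at h0
      rw [h0]
    have hR : ∑ m ∈ Finset.Ioc (-1 : ℤ) ((n : ℤ) - 1), a (p - 1 - m) * b (m - (q - 1))
        = (∑ m ∈ Finset.Ioc (0 : ℤ) ((n : ℤ) - 1), f m) + f n := by
      have sh := myShift f (-1) ((n : ℤ) - 1) 1
      rw [show (-1 : ℤ) + 1 = 0 by ring, show ((n : ℤ) - 1) + 1 = (n : ℤ) by ring] at sh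
      have e1 : ∑ m ∈ Finset.Ioc (-1 : ℤ) ((n : ℤ) - 1), a (p - 1 - m) * b (m - (q - 1))
          = ∑ m ∈ Finset.Ioc (-1 : ℤ) ((n : ℤ) - 1), f (m + 1) := by
        refine Finset.sum_congr rfl fun m _ => ?_
        simp only [hf]
        rw [show p - (m + 1) = p - 1 - m by ring, show m + 1 - q = m - (q - 1) by ring]
      rw [e1, ← sh, mySplit f (a := 0) (b := (n : ℤ) - 1) (by omega) (by omega)]
      congr 1
      have h1 := mySingleton f n
      rw [h1]
    rw [hL, hR] at heq
    have key : f 0 = f (n : ℤ) := by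
      have h2 : (∑ m ∈ Finset.Ioc (0 : ℤ) ((n : ℤ) - 1), f m) + f 0
          = (∑ m ∈ Finset.Ioc (0 : ℤ) ((n : ℤ) - 1), f m) + f (n : ℤ) := by
        rw [add_comm _ (f 0)]; exact heq
      exact add_left_cancel h2
    simp only [hf] at key
    rw [show p - (0 : ℤ) = p by ring, show (0 : ℤ) - q = -q by ring] at key
    exact key
  refine Matrix.ext fun i j => ?_
  rw [mulEntry hA hB i j, mulEntry hB hA i j,
    core n hn a b hc hstar (i : ℤ) (j : ℤ) (by omega) (by have := i.isLt; omega) (by omega)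
      (by have := j.isLt; omega)]

end
end

section
/- Fix X ∈ 𝒜′ and let 𝐀 be a block matrix all of whose entries lie in 𝒜. Then 𝐀𝐒_X = 𝐒_X𝐀 if and only if 𝐀 is block Toeplitz, say A_{i,j} = M_{i−j} for d×d matrices M_{−(n−1)},…,M_{n−1}, with M_{k−n} = M_k X for every 1 ≤ k ≤ n−1. -/
/-! Compare the entries of `𝐀𝐒_X` and `𝐒_X𝐀`. Away from the first block row and the last block
column the equation reads `A_{i+1,j+1} = A_{i,j}`, so `𝐀` is block Toeplitz, `A_{i,j} = M_{i-j}`.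
On the last block column it then reads `M_k X = M_{k-n}`, and on the first block row
`M_{-j-1} = X M_{n-1-j}`, which is the same condition because `X` commutes with the entries
of `𝐀`. -/

open Matrix BigOperators

noncomputable section

theorem IsBlockToeplitz.exists_eq_sub {n d : ℕ} {A : BlkMat n d} (hA : IsBlockToeplitz A) :
    ∃ M : ℤ → Blk d, ∀ i j : Fin n, A i j = M ((i : ℤ) - (j : ℤ)) := by
  have hfactor : Function.FactorsThrough (fun p : Fin n × Fin n => A p.1 p.2)
      (fun p => (p.1 : ℤ) - (p.2 : ℤ)) := fun p q hpq => hA p.1 p.2 q.1 q.2 hpq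
  exact ⟨Function.extend _ _ 0, fun i j => (hfactor.extend_apply 0 (i, j)).symm⟩

section SX

variable {m d : ℕ} (X : Blk d)

theorem SX_apply_castSucc (k : Fin (m + 1)) (j : Fin m) :
    SX (m + 1) d X k j.castSucc = if k = j.succ then 1 else 0 := by
  have := j.isLt
  simp only [SX, of_apply, Fin.ext_iff, Fin.val_castSucc, Fin.val_succ]
  split_ifs <;> first | rfl | omega

theorem SX_apply_last (k : Fin (m + 1)) :
    SX (m + 1) d X k (Fin.last m) = if k = 0 then X else 0 := by
  have := k.isLt
  simp only [SX, of_apply, Fin.ext_iff, Fin.val_last, Fin.val_zero]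
  split_ifs <;> first | rfl | omega

theorem SX_apply_succ (i : Fin m) (k : Fin (m + 1)) :
    SX (m + 1) d X i.succ k = if k = i.castSucc then 1 else 0 := by
  simp only [SX, of_apply, Fin.ext_iff, Fin.val_castSucc, Fin.val_succ, Nat.add_right_cancel_iff,
    @eq_comm _ (k : ℕ), Nat.succ_ne_zero, false_and, if_false]

theorem SX_apply_zero (k : Fin (m + 1)) :
    SX (m + 1) d X 0 k = if k = Fin.last m then X else 0 := by
  simp only [SX, of_apply, Fin.ext_iff, Fin.val_last, Fin.val_zero, true_and, Nat.add_sub_cancel]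
  simp

variable (A : BlkMat (m + 1) d)

theorem mul_SX_apply_castSucc (i : Fin (m + 1)) (j : Fin m) :
    (A * SX (m + 1) d X) i j.castSucc = A i j.succ := by
  simp [mul_apply, SX_apply_castSucc]

theorem mul_SX_apply_last (i : Fin (m + 1)) :
    (A * SX (m + 1) d X) i (Fin.last m) = A i 0 * X := by
  simp [mul_apply, SX_apply_last]

theorem SX_mul_apply_succ (i : Fin m) (j : Fin (m + 1)) :
    (SX (m + 1) d X * A) i.succ j = A i.castSucc j := by
  simp [mul_apply, SX_apply_succ]

theorem SX_mul_apply_zero (j : Fin (m + 1)) :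
    (SX (m + 1) d X * A) 0 j = X * A (Fin.last m) j := by
  simp [mul_apply, SX_apply_zero]

end SX

theorem isBlockToeplitz_of_succ {m d : ℕ} {A : BlkMat (m + 1) d}
    (h : ∀ i j : Fin m, A i.succ j.succ = A i.castSucc j.castSucc) : IsBlockToeplitz A := by
  have shift : ∀ (t : ℕ) (i j i' j' : Fin (m + 1)),
      (i' : ℕ) = i + t → (j' : ℕ) = j + t → A i' j' = A i j := by
    intro t
    induction t with
    | zero => intro i j i' j' hi hj; rw [Fin.ext hi, Fin.ext hj]
    | succ t ih =>
      intro i j i' j' hi hj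
      let i₀ : Fin m := ⟨i + t, by omega⟩
      let j₀ : Fin m := ⟨j + t, by omega⟩
      calc A i' j' = A i₀.succ j₀.succ := by
            congr 1 <;> ext <;> simp only [Fin.val_succ, i₀, j₀] <;> omega
        _ = A i j := by rw [h]; exact ih i j _ _ rfl rfl
  intro i j i' j' hdiff
  rcases le_total (i : ℕ) i' with hle | hle
  · exact (shift (i' - i) i j i' j' (by omega) (by omega)).symm
  · exact shift (i - i') i' j' i j (by omega) (by omega)

section Commute

variable {m d : ℕ} {X : Blk d} {A : BlkMat (m + 1) d}

theorem isBlockToeplitz_of_mul_SX_eq_SX_mul (h : A * SX (m + 1) d X = SX (m + 1) d X * A) :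
    IsBlockToeplitz A :=
  isBlockToeplitz_of_succ fun i j => by
    simpa only [mul_SX_apply_castSucc, SX_mul_apply_succ] using congr_fun₂ h i.succ j.castSucc

theorem wrap_of_mul_SX_eq_SX_mul (h : A * SX (m + 1) d X = SX (m + 1) d X * A)
    {M : ℤ → Blk d} (hM : ∀ i j : Fin (m + 1), A i j = M ((i : ℤ) - (j : ℤ))) :
    ∀ k : ℕ, 1 ≤ k → k ≤ m + 1 - 1 → M ((k : ℤ) - ((m + 1 : ℕ) : ℤ)) = M (k : ℤ) * X := by
  intro k hk hkm
  obtain ⟨l, rfl⟩ : ∃ l, k = l + 1 := ⟨k - 1, by omega⟩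
  have hcorner := congr_fun₂ h (Fin.succ ⟨l, by omega⟩) (Fin.last m)
  rw [mul_SX_apply_last, SX_mul_apply_succ, hM, hM] at hcorner
  convert hcorner.symm using 2 <;> simp

theorem mul_SX_eq_SX_mul_of_wrap {M : ℤ → Blk d}
    (hM : ∀ i j : Fin (m + 1), A i j = M ((i : ℤ) - (j : ℤ)))
    (hwrap : ∀ k : ℕ, 1 ≤ k → k ≤ m + 1 - 1 → M ((k : ℤ) - ((m + 1 : ℕ) : ℤ)) = M (k : ℤ) * X)
    (hX : ∀ i j, X * A i j = A i j * X) :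
    A * SX (m + 1) d X = SX (m + 1) d X * A := by
  refine Matrix.ext fun i j => ?_
  induction j using Fin.lastCases with
  | last =>
    induction i using Fin.cases with
    | zero => rw [mul_SX_apply_last, SX_mul_apply_zero, hX, hM, hM]; simp
    | succ i =>
      rw [mul_SX_apply_last, SX_mul_apply_succ, hM, hM]
      convert (hwrap (i + 1) (by omega) (by omega)).symm using 2 <;> simp
  | cast j =>
    induction i using Fin.cases with
    | zero =>
      rw [mul_SX_apply_castSucc, SX_mul_apply_zero, hX, hM, hM]
      convert hwrap (m - j) (by omega) (by omega) using 2 <;> simp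
      omega
    | succ i =>
      rw [mul_SX_apply_castSucc, SX_mul_apply_succ, hM, hM]
      congr 1; simp

end Commute

theorem commutes_with_SX_iff_general (n d : ℕ) (hn : 0 < n)
    (𝒜 : Subalgebra ℂ (Blk d))
    (X : Blk d) (hX : ∀ a ∈ 𝒜, X * a = a * X)
    (A : BlkMat n d) (hAmem : ∀ i j, A i j ∈ 𝒜) :
    A * SX n d X = SX n d X * A ↔
      ∃ M : ℤ → Blk d,
        (∀ i j : Fin n, A i j = M ((i : ℤ) - (j : ℤ))) ∧
        (∀ k : ℕ, 1 ≤ k → k ≤ n - 1 → M ((k : ℤ) - (n : ℤ)) = M (k : ℤ) * X) := by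
  obtain ⟨m, rfl⟩ := Nat.exists_eq_add_one_of_ne_zero hn.ne'
  constructor
  · intro h
    obtain ⟨M, hM⟩ := (isBlockToeplitz_of_mul_SX_eq_SX_mul h).exists_eq_sub
    exact ⟨M, hM, wrap_of_mul_SX_eq_SX_mul h hM⟩
  · rintro ⟨M, hM, hwrap⟩
    exact mul_SX_eq_SX_mul_of_wrap hM hwrap fun i j => hX _ (hAmem i j)

/-- `𝐀` with entries in `𝒜` commutes with `𝐒_X` iff `𝐀` is block Toeplitz, say
`A_{i,j} = M_{i-j}`, with `M_{k-n} = M_k X` for `1 ≤ k ≤ n-1`. -/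
theorem commutes_with_SX_iff (n d : ℕ) (hn : 0 < n) (hd : 0 < d)
    (𝒜 : Subalgebra ℂ (Blk d)) (hcomm : ∀ a ∈ 𝒜, ∀ b ∈ 𝒜, a * b = b * a)
    (X : Blk d) (hX : ∀ a ∈ 𝒜, X * a = a * X)
    (A : BlkMat n d) (hAmem : ∀ i j, A i j ∈ 𝒜) :
    A * SX n d X = SX n d X * A ↔
      ∃ M : ℤ → Blk d,
        (∀ i j : Fin n, A i j = M ((i : ℤ) - (j : ℤ))) ∧
        (∀ k : ℕ, 1 ≤ k → k ≤ n - 1 → M ((k : ℤ) - (n : ℤ)) = M (k : ℤ) * X) :=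
  commutes_with_SX_iff_general n d hn 𝒜 X hX A hAmem
end
end

section
/- Fix X ∈ 𝒜′. If 𝐀 and 𝐁 are block Toeplitz matrices all of whose entries lie in 𝒜 and both commute with 𝐒_X (𝐀𝐒_X = 𝐒_X𝐀 and 𝐁𝐒_X = 𝐒_X𝐁), then the product 𝐀𝐁 is block Toeplitz. -/
open Matrix BigOperators

noncomputable section

section Aux

variable {n d : ℕ}

lemma mul_SX_apply (X : Blk d) (M : BlkMat n d) (i j j' : Fin n)
    (h : (j' : ℕ) = (j : ℕ) + 1) :
    (M * SX n d X) i j = M i j' := by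
  have hjn : (j : ℕ) ≠ n - 1 := by have := j'.isLt; omega
  rw [Matrix.mul_apply, Finset.sum_eq_single j']
  · have : (j' : ℕ) = (j : ℕ) + 1 := h
    simp [SX, this]
  · intro k _ hk
    have h1 : ¬ ((k : ℕ) = (j : ℕ) + 1) := by
      intro hkk; exact hk (Fin.ext (by omega))
    simp [SX, h1, hjn]
  · simp

lemma mul_SX_last (X : Blk d) (M : BlkMat n d) (i k l : Fin n)
    (hk : (k : ℕ) = n - 1) (hl : (l : ℕ) = 0) :
    (M * SX n d X) i k = M i l * X := by
  rw [Matrix.mul_apply, Finset.sum_eq_single l]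
  · have h1 : ¬ ((l : ℕ) = (k : ℕ) + 1) := by have := k.isLt; omega
    simp [SX, h1, hl, hk]
  · intro b _ hb
    have hbne : (b : ℕ) ≠ 0 := by intro hb0; exact hb (Fin.ext (by omega))
    have h1 : ¬ ((b : ℕ) = (k : ℕ) + 1) := by have := b.isLt; have := k.isLt; omega
    simp [SX, h1, hbne]
  · simp

lemma SX_mul_succ (X : Blk d) (M : BlkMat n d) (i i' j : Fin n)
    (h : (i : ℕ) = (i' : ℕ) + 1) :
    (SX n d X * M) i j = M i' j := by
  rw [Matrix.mul_apply, Finset.sum_eq_single i']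
  · have : (i : ℕ) = (i' : ℕ) + 1 := h
    simp [SX, this]
  · intro b _ hb
    have h1 : ¬ ((i : ℕ) = (b : ℕ) + 1) := by
      intro hkk; exact hb (Fin.ext (by omega))
    have h2 : ¬ ((i : ℕ) = 0) := by omega
    simp [SX, h1, h2]
  · simp

lemma SX_mul_zero (X : Blk d) (M : BlkMat n d) (i k j : Fin n)
    (hi : (i : ℕ) = 0) (hk : (k : ℕ) = n - 1) :
    (SX n d X * M) i j = X * M k j := by
  rw [Matrix.mul_apply, Finset.sum_eq_single k]
  · have h1 : ¬ ((i : ℕ) = (k : ℕ) + 1) := by have := k.isLt; omega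
    simp [SX, h1, hi, hk]
  · intro b _ hb
    have hbne : (b : ℕ) ≠ n - 1 := by intro hb0; exact hb (Fin.ext (by omega))
    have h1 : ¬ ((i : ℕ) = (b : ℕ) + 1) := by omega
    simp [SX, h1, hbne, hi]
  · simp

lemma toeplitz_of_step (C : BlkMat n d)
    (h : ∀ (i j : ℕ) (hi : i + 1 < n) (hj : j + 1 < n),
      C ⟨i + 1, hi⟩ ⟨j + 1, hj⟩ = C ⟨i, by omega⟩ ⟨j, by omega⟩) :
    IsBlockToeplitz C := by
  have aux : ∀ (t : ℕ) (i j i' j' : Fin n), (i' : ℕ) = (i : ℕ) + t →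
      (j' : ℕ) = (j : ℕ) + t → C i' j' = C i j := by
    intro t
    induction t with
    | zero =>
      intro i j i' j' h1 h2
      have e1 : i' = i := Fin.ext (by omega)
      have e2 : j' = j := Fin.ext (by omega)
      rw [e1, e2]
    | succ t ih =>
      intro i j i' j' h1 h2
      have hb1 : (i : ℕ) + t + 1 < n := h1 ▸ i'.isLt
      have hb2 : (j : ℕ) + t + 1 < n := h2 ▸ j'.isLt
      have e1 : i' = ⟨(i : ℕ) + t + 1, hb1⟩ := Fin.ext (by simp only [Fin.val_mk]; omega)
      have e2 : j' = ⟨(j : ℕ) + t + 1, hb2⟩ := Fin.ext (by simp only [Fin.val_mk]; omega)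
      rw [e1, e2, h ((i : ℕ) + t) ((j : ℕ) + t) hb1 hb2]
      exact ih i j ⟨(i : ℕ) + t, by omega⟩ ⟨(j : ℕ) + t, by omega⟩ rfl rfl
  intro i j i' j' hdiff
  rcases le_total (i : ℕ) (i' : ℕ) with hle | hle
  · exact (aux ((i' : ℕ) - (i : ℕ)) i j i' j' (by omega) (by omega)).symm
  · exact aux ((i : ℕ) - (i' : ℕ)) i' j' i j (by omega) (by omega)

lemma step_lemma {m d : ℕ} (X : Blk d) (A B : BlkMat (m + 1) d)
    (hA : IsBlockToeplitz A) (hB : IsBlockToeplitz B)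
    (hAX : A * SX (m + 1) d X = SX (m + 1) d X * A)
    (hBX : B * SX (m + 1) d X = SX (m + 1) d X * B)
    (i j : ℕ) (hi : i + 1 < m + 1) (hj : j + 1 < m + 1) :
    (A * B) ⟨i + 1, hi⟩ ⟨j + 1, hj⟩ = (A * B) ⟨i, by omega⟩ ⟨j, by omega⟩ := by
  have hm : 0 < m := by omega
  -- key identities from commutation with SX
  have key1 : B ⟨0, by omega⟩ ⟨j + 1, hj⟩ = X * B ⟨m, by omega⟩ ⟨j, by omega⟩ := by
    have h0 := congrFun (congrFun hBX (⟨0, by omega⟩ : Fin (m + 1))) ⟨j, by omega⟩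
    rwa [mul_SX_apply X B _ _ (⟨j + 1, hj⟩ : Fin (m + 1)) rfl,
      SX_mul_zero X B _ (⟨m, by omega⟩ : Fin (m + 1)) _ rfl (by simp)] at h0
  have key2 : A ⟨i + 1, hi⟩ ⟨0, by omega⟩ * X = A ⟨i, by omega⟩ ⟨m, by omega⟩ := by
    have h0 := congrFun (congrFun hAX (⟨i + 1, hi⟩ : Fin (m + 1))) ⟨m, by omega⟩
    rwa [mul_SX_last X A _ _ (⟨0, by omega⟩ : Fin (m + 1)) (by simp) rfl,
      SX_mul_succ X A _ (⟨i, by omega⟩ : Fin (m + 1)) _ rfl] at h0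
  rw [Matrix.mul_apply, Matrix.mul_apply, Fin.sum_univ_succ, Fin.sum_univ_castSucc]
  have hsum : ∀ k : Fin m,
      A ⟨i + 1, hi⟩ k.succ * B k.succ ⟨j + 1, hj⟩ =
      A ⟨i, by omega⟩ k.castSucc * B k.castSucc ⟨j, by omega⟩ := by
    intro k
    have hAk : A ⟨i + 1, hi⟩ k.succ = A ⟨i, by omega⟩ k.castSucc := by
      apply hA; simp [Fin.coe_castSucc, Fin.val_succ]
    have hBk : B k.succ ⟨j + 1, hj⟩ = B k.castSucc ⟨j, by omega⟩ := by
      apply hB; simp [Fin.coe_castSucc, Fin.val_succ]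
    rw [hAk, hBk]
  rw [Finset.sum_congr rfl (fun k _ => hsum k)]
  have hcorner : A ⟨i + 1, hi⟩ (0 : Fin (m + 1)) * B (0 : Fin (m + 1)) ⟨j + 1, hj⟩ =
      A ⟨i, by omega⟩ (Fin.last m) * B (Fin.last m) ⟨j, by omega⟩ := by
    have e0' : (0 : Fin (m + 1)) = ⟨0, by omega⟩ := rfl
    have elast : (Fin.last m) = (⟨m, by omega⟩ : Fin (m + 1)) := rfl
    rw [e0', elast, key1, ← mul_assoc, key2]
  rw [hcorner]
  exact add_comm _ _

end Aux

/-- If two block Toeplitz matrices with entries in `𝒜` both commute with `𝐒_X`,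
then their product is block Toeplitz. -/
theorem toeplitz_product_of_commutes_SX (n d : ℕ) (hn : 0 < n) (hd : 0 < d)
    (𝒜 : Subalgebra ℂ (Blk d)) (hcomm : ∀ a ∈ 𝒜, ∀ b ∈ 𝒜, a * b = b * a)
    (X : Blk d) (hX : ∀ a ∈ 𝒜, X * a = a * X)
    (A B : BlkMat n d)
    (hAmem : ∀ i j, A i j ∈ 𝒜) (hBmem : ∀ i j, B i j ∈ 𝒜)
    (hA : IsBlockToeplitz A) (hB : IsBlockToeplitz B)
    (hAX : A * SX n d X = SX n d X * A)
    (hBX : B * SX n d X = SX n d X * B) :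
    IsBlockToeplitz (A * B) := by
  obtain ⟨m, rfl⟩ : ∃ m, n = m + 1 := ⟨n - 1, by omega⟩
  exact toeplitz_of_step _ (step_lemma X A B hA hB hAX hBX)
end
end

section
/- Let 𝐀 = (A_{i,j})_{i,j=1}^n be a block matrix all of whose entries lie in 𝒜. Then 𝐀 is normal if and only if both of the following hold: (1) for every p with 1 ≤ p ≤ n, Σ_{k=1, k≠p}^{n} [ (A_{k,p})*A_{k,p} − A_{p,k}(A_{p,k})* ] = 0; and (2) for all 1 ≤ i < j ≤ n, Σ_{k=1}^{n} [ (A_{k,i})*A_{k,j} − A_{i,k}(A_{j,k})* ] = 0. -/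
open Matrix BigOperators

noncomputable section

/-- `𝐀` with entries in a commutative star-closed `𝒜` is normal iff the diagonal
and off-diagonal sum conditions hold. -/
theorem normal_iff_sums (n d : ℕ) (hn : 0 < n) (hd : 0 < d)
    (𝒜 : Subalgebra ℂ (Blk d)) (hcomm : ∀ a ∈ 𝒜, ∀ b ∈ 𝒜, a * b = b * a)
    (hstar : ∀ a ∈ 𝒜, aᴴ ∈ 𝒜)
    (A : BlkMat n d) (hAmem : ∀ i j, A i j ∈ 𝒜) :
    star A * A = A * star A ↔
      ((∀ p : Fin n,
          ∑ k ∈ Finset.univ.erase p, ((A k p)ᴴ * A k p - A p k * (A p k)ᴴ) = 0) ∧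
       (∀ i j : Fin n, (i : ℕ) < (j : ℕ) →
          ∑ k : Fin n, ((A k i)ᴴ * A k j - A i k * (A j k)ᴴ) = 0)) := by

  have key : ∀ p q : Fin n,
      (∑ k : Fin n, ((A k p)ᴴ * A k q - A p k * (A q k)ᴴ) = 0) ↔
      (∑ k : Fin n, (A k p)ᴴ * A k q = ∑ k : Fin n, A p k * (A q k)ᴴ) := by
    intro p q
    rw [Finset.sum_sub_distrib, sub_eq_zero]
  have hdiag : ∀ p : Fin n, (A p p)ᴴ * A p p - A p p * (A p p)ᴴ = 0 := by
    intro p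
    rw [sub_eq_zero]
    exact hcomm _ (hstar _ (hAmem p p)) _ (hAmem p p)
  constructor
  · intro h
    have hpq : ∀ p q : Fin n, ∑ k : Fin n, ((A k p)ᴴ * A k q - A p k * (A q k)ᴴ) = 0 := by
      intro p q
      rw [key]
      have := congrFun (congrFun h p) q
      simpa [Matrix.mul_apply, Matrix.star_apply, Matrix.star_eq_conjTranspose] using this
    refine ⟨fun p => ?_, fun i j _ => hpq i j⟩
    rw [Finset.sum_erase (f := fun k => (A k p)ᴴ * A k p - A p k * (A p k)ᴴ) Finset.univ (hdiag p)]
    exact hpq p p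
  · rintro ⟨h1, h2⟩
    have hpq : ∀ p q : Fin n, ∑ k : Fin n, ((A k p)ᴴ * A k q - A p k * (A q k)ᴴ) = 0 := by
      intro p q
      rcases lt_trichotomy (p : ℕ) (q : ℕ) with hlt | heq | hgt
      · exact h2 p q hlt
      · have hpq' : p = q := Fin.ext heq
        subst hpq'
        rw [← Finset.sum_erase (f := fun k => (A k p)ᴴ * A k p - A p k * (A p k)ᴴ) Finset.univ (hdiag p)]
        exact h1 p
      · have := congrArg star (h2 q p hgt)
        simpa [star_sum, star_sub, StarMul.star_mul, Matrix.star_eq_conjTranspose] using this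
    refine Matrix.ext fun p q => ?_
    simp only [Matrix.mul_apply, Matrix.star_apply, Matrix.star_eq_conjTranspose,
      Matrix.conjTranspose_apply]
    exact (key p q).mp (hpq p q)
end
end

section
/- Let A = (0,A_1,…,A_{n−1})ᵗ and Ω = (0,Ω_1,…,Ω_{n−1})ᵗ be block column vectors with entries in 𝒜, let A₀ ∈ 𝒜, and let 𝐀 = T(A,Ω) + 𝐀₀. Then 𝐀 is normal if and only if for all s, k with 1 ≤ s ≤ n−1 and 1 ≤ k ≤ n−1, A_s(A_k)* + (A_{n−s})*A_{n−k} = Ω_s(Ω_k)* + (Ω_{n−s})*Ω_{n−k}. -/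
open Matrix BigOperators

noncomputable section

namespace NTAux

open Finset Matrix

variable {n d : ℕ}

lemma solve1 {R : Type*} [Ring R] {a1 a1' a2 w1 w1' w2 : R} (ha : a1 = a1') (hw : w1 = w1')
    (h : (w1' - a1') + (w2 - a2) = 0) : a1 + a2 = w1 + w2 := by
  rw [ha, hw, ← sub_eq_zero]
  have e : a1' + a2 - (w1' + w2) = -((w1' - a1') + (w2 - a2)) := by abel
  rw [e, h, neg_zero]

lemma solve2 {R : Type*} [Ring R] {a1 a1' a2 w1 w1' w2 : R} (ha : a1' = a1) (hw : w1' = w1)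
    (h : a1 + a2 = w1 + w2) : (w1' - a1') + (w2 - a2) = 0 := by
  rw [ha, hw]
  have e : (w1 - a1) + (w2 - a2) = (w1 + w2) - (a1 + a2) := by abel
  rw [e, h, sub_self]

/-- extend a block vector to ℕ indices (0 beyond `n`) -/
def av (A : BlkVec n d) : ℕ → Blk d := fun m => if h : m < n then A ⟨m, h⟩ else 0

lemma av_apply (A : BlkVec n d) (m : ℕ) (h : m < n) : av A m = A ⟨m, h⟩ := dif_pos h

def qq (A Ω : BlkVec n d) : ℕ → ℕ → Blk d :=
  fun s k => (av Ω s)ᴴ * av Ω k - (av A s)ᴴ * av A k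

def SS (A Ω : BlkVec n d) : ℕ → ℕ → Blk d :=
  fun t r => ∑ m ∈ Finset.range r, qq A Ω (m + 1) (m + 1 + t)

lemma SS_succ (A Ω : BlkVec n d) (t r : ℕ) :
    SS A Ω t (r + 1) = SS A Ω t r + qq A Ω (r + 1) (r + 1 + t) :=
  Finset.sum_range_succ _ _

lemma SS_zero (A Ω : BlkVec n d) (t : ℕ) : SS A Ω t 0 = 0 := Finset.sum_range_zero _

lemma qq_star (A Ω : BlkVec n d) (a b : ℕ) : (qq A Ω a b)ᴴ = qq A Ω b a := by
  unfold qq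
  rw [conjTranspose_sub, conjTranspose_mul, conjTranspose_mul,
    conjTranspose_conjTranspose, conjTranspose_conjTranspose]

def ent (A Ω : BlkVec n d) (A₀ : Blk d) : ℕ → ℕ → Blk d :=
  fun i j => if j < i then av A (i - j) else if i < j then (av Ω (j - i))ᴴ else A₀

def uu (Ω : BlkVec n d) (A₀ : Blk d) : ℕ → Blk d :=
  fun m => if m = 0 then A₀ else (av Ω m)ᴴ

def vv (A : BlkVec n d) (A₀ : Blk d) : ℕ → Blk d :=
  fun m => if m = 0 then A₀ else av A m

lemma ent_lt (A Ω : BlkVec n d) (A₀ : Blk d) {i j : ℕ} (h : j < i) :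
    ent A Ω A₀ i j = av A (i - j) := if_pos h

lemma ent_gt (A Ω : BlkVec n d) (A₀ : Blk d) {i j : ℕ} (h : i < j) :
    ent A Ω A₀ i j = (av Ω (j - i))ᴴ := by
  unfold ent; rw [if_neg (by omega), if_pos h]

lemma ent_le (A Ω : BlkVec n d) (A₀ : Blk d) {i j : ℕ} (h : j ≤ i) :
    ent A Ω A₀ i j = vv A A₀ (i - j) := by
  unfold ent vv
  rcases lt_or_eq_of_le h with h' | h'
  · rw [if_pos h', if_neg (by omega)]
  · subst h'; rw [if_neg (by omega), if_neg (by omega), Nat.sub_self, if_pos rfl]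

lemma ent_ge (A Ω : BlkVec n d) (A₀ : Blk d) {i j : ℕ} (h : j ≤ i) :
    ent A Ω A₀ j i = uu Ω A₀ (i - j) := by
  unfold ent uu
  rcases lt_or_eq_of_le h with h' | h'
  · rw [if_neg (by omega), if_pos h', if_neg (by omega)]
  · subst h'; rw [if_neg (by omega), if_neg (by omega), Nat.sub_self, if_pos rfl]

lemma Am_apply (A Ω : BlkVec n d) (A₀ : Blk d) (i j : Fin n) :
    ((Tmat A Ω + Matrix.diagonal fun _ => A₀ : BlkMat n d)) i j = ent A Ω A₀ (i : ℕ) (j : ℕ) := by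
  rw [Matrix.add_apply]
  rcases lt_trichotomy (j : ℕ) (i : ℕ) with h | h | h
  · have hne : i ≠ j := fun he => absurd h (by simp [he])
    rw [Matrix.diagonal_apply_ne _ hne, add_zero, ent_lt A Ω A₀ h, Tmat, Matrix.of_apply,
      if_pos h, av_apply A _ ((Nat.sub_le _ _).trans_lt i.isLt)]
  · have he : i = j := Fin.val_injective h.symm
    subst he
    rw [Matrix.diagonal_apply_eq, Tmat, Matrix.of_apply, if_neg (lt_irrefl _),
      if_neg (lt_irrefl _), zero_add]
    unfold ent
    rw [if_neg (lt_irrefl _), if_neg (lt_irrefl _)]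
  · have hne : i ≠ j := fun he => absurd h (by simp [he])
    rw [Matrix.diagonal_apply_ne _ hne, add_zero, ent_gt A Ω A₀ h, Tmat, Matrix.of_apply,
      if_neg (by omega), if_pos h, av_apply Ω _ ((Nat.sub_le _ _).trans_lt j.isLt)]

lemma entry_formula {𝒜 : Subalgebra ℂ (Blk d)}
    (hcomm : ∀ a ∈ 𝒜, ∀ b ∈ 𝒜, a * b = b * a) (hstar : ∀ a ∈ 𝒜, aᴴ ∈ 𝒜)
    {A Ω : BlkVec n d} (hAmem : ∀ i, A i ∈ 𝒜) (hΩmem : ∀ i, Ω i ∈ 𝒜)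
    {A₀ : Blk d} (hA₀ : A₀ ∈ 𝒜) (i j : Fin n) (hij : (j : ℕ) ≤ (i : ℕ)) :
    ((Tmat A Ω + Matrix.diagonal fun _ => A₀) * star (Tmat A Ω + Matrix.diagonal fun _ => A₀)
      - star (Tmat A Ω + Matrix.diagonal fun _ => A₀) * (Tmat A Ω + Matrix.diagonal fun _ => A₀)
      : BlkMat n d) i j
    = SS A Ω ((i : ℕ) - (j : ℕ)) (n - 1 - (i : ℕ)) - SS A Ω ((i : ℕ) - (j : ℕ)) (j : ℕ) := by
  have hi' := i.isLt
  have hj' := j.isLt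
  have hav : ∀ m, av A m ∈ 𝒜 := by
    intro m; unfold av; split
    · exact hAmem _
    · exact zero_mem 𝒜
  have hwv : ∀ m, av Ω m ∈ 𝒜 := by
    intro m; unfold av; split
    · exact hΩmem _
    · exact zero_mem 𝒜
  have huu : ∀ m, uu Ω A₀ m ∈ 𝒜 := by
    intro m; unfold uu; split
    · exact hA₀
    · exact hstar _ (hwv _)
  have hvv : ∀ m, vv A A₀ m ∈ 𝒜 := by
    intro m; unfold vv; split
    · exact hA₀
    · exact hav _
  set t : ℕ := (i : ℕ) - (j : ℕ) with ht
  set f : ℕ → Blk d := fun l =>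
    ent A Ω A₀ (i : ℕ) l * (ent A Ω A₀ (j : ℕ) l)ᴴ
      - (ent A Ω A₀ l (i : ℕ))ᴴ * ent A Ω A₀ l (j : ℕ) with hf
  have hsum : ((Tmat A Ω + Matrix.diagonal fun _ => A₀) * star (Tmat A Ω + Matrix.diagonal fun _ => A₀)
      - star (Tmat A Ω + Matrix.diagonal fun _ => A₀) * (Tmat A Ω + Matrix.diagonal fun _ => A₀)
      : BlkMat n d) i j
      = ∑ l ∈ Finset.range n, f l := by
    rw [Matrix.sub_apply, Matrix.mul_apply, Matrix.mul_apply, ← Finset.sum_sub_distrib,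
      ← Fin.sum_univ_eq_sum_range f n]
    apply Finset.sum_congr rfl
    intro l _
    simp only [hf, Matrix.star_eq_conjTranspose, Matrix.conjTranspose_apply,
      Matrix.star_eq_conjTranspose, Am_apply]
  have h1 : ∑ l ∈ Finset.Ico 0 (j : ℕ), f l = -(SS A Ω t (j : ℕ)) := by
    rw [← Finset.range_eq_Ico]
    have step1 : ∀ l ∈ Finset.range (j : ℕ), f l = -(qq A Ω ((j : ℕ) - l) ((i : ℕ) - l)) := by
      intro l hl
      have hlj : l < (j : ℕ) := Finset.mem_range.mp hl
      have hli : l < (i : ℕ) := lt_of_lt_of_le hlj hij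
      simp only [hf]
      rw [ent_lt A Ω A₀ hli, ent_lt A Ω A₀ hlj, ent_gt A Ω A₀ hli, ent_gt A Ω A₀ hlj,
        conjTranspose_conjTranspose]
      unfold qq
      rw [neg_sub]
      rw [hcomm _ (hav ((i : ℕ) - l)) _ (hstar _ (hav ((j : ℕ) - l))),
        hcomm _ (hwv ((i : ℕ) - l)) _ (hstar _ (hwv ((j : ℕ) - l)))]
    rw [Finset.sum_congr rfl step1,
      ← Finset.sum_range_reflect (fun l => -(qq A Ω ((j : ℕ) - l) ((i : ℕ) - l))) (j : ℕ)]
    unfold SS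
    rw [← Finset.sum_neg_distrib]
    apply Finset.sum_congr rfl
    intro m hm
    have hm' : m < (j : ℕ) := Finset.mem_range.mp hm
    have e1 : (j : ℕ) - ((j : ℕ) - 1 - m) = m + 1 := by omega
    have e2 : (i : ℕ) - ((j : ℕ) - 1 - m) = m + 1 + t := by omega
    try dsimp only
    rw [e1, e2]
  have h3 : ∑ l ∈ Finset.Ico ((i : ℕ) + 1) n, f l = SS A Ω t (n - 1 - (i : ℕ)) := by
    rw [Finset.sum_Ico_eq_sum_range]
    have en : n - ((i : ℕ) + 1) = n - 1 - (i : ℕ) := by omega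
    rw [en]
    unfold SS
    apply Finset.sum_congr rfl
    intro m hm
    have hm' : m < n - 1 - (i : ℕ) := Finset.mem_range.mp hm
    have hgi : (i : ℕ) < (i : ℕ) + 1 + m := by omega
    have hgj : (j : ℕ) < (i : ℕ) + 1 + m := by omega
    simp only [hf]
    rw [ent_gt A Ω A₀ hgi, ent_gt A Ω A₀ hgj, ent_lt A Ω A₀ hgi, ent_lt A Ω A₀ hgj,
      conjTranspose_conjTranspose]
    unfold qq
    have e1 : (i : ℕ) + 1 + m - (i : ℕ) = m + 1 := by omega
    have e2 : (i : ℕ) + 1 + m - (j : ℕ) = m + 1 + t := by omega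
    rw [e1, e2]
  have h2 : ∑ l ∈ Finset.Ico (j : ℕ) ((i : ℕ) + 1), f l = 0 := by
    have key : ∀ l, (j : ℕ) ≤ l → l ≤ (i : ℕ) → f l =
        vv A A₀ ((i : ℕ) - l) * (uu Ω A₀ (l - (j : ℕ)))ᴴ
          - (uu Ω A₀ ((i : ℕ) - l))ᴴ * vv A A₀ (l - (j : ℕ)) := by
      intro l h1l h2l
      simp only [hf]
      rw [ent_le A Ω A₀ h2l, ent_ge A Ω A₀ h1l, ent_ge A Ω A₀ h2l, ent_le A Ω A₀ h1l]
    apply Finset.sum_involution (fun l _ => (i : ℕ) + (j : ℕ) - l)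
    · intro l hl
      rw [Finset.mem_Ico] at hl
      obtain ⟨h1l, h2l⟩ := hl
      have h2l' : l ≤ (i : ℕ) := by omega
      have h1g : (j : ℕ) ≤ (i : ℕ) + (j : ℕ) - l := by omega
      have h2g : (i : ℕ) + (j : ℕ) - l ≤ (i : ℕ) := by omega
      try dsimp only
      rw [key l h1l h2l', key _ h1g h2g]
      have e1 : (i : ℕ) - ((i : ℕ) + (j : ℕ) - l) = l - (j : ℕ) := by omega
      have e2 : (i : ℕ) + (j : ℕ) - l - (j : ℕ) = (i : ℕ) - l := by omega
      rw [e1, e2]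
      rw [hcomm _ (hvv ((i : ℕ) - l)) _ (hstar _ (huu (l - (j : ℕ)))),
        hcomm _ (hvv (l - (j : ℕ))) _ (hstar _ (huu ((i : ℕ) - l)))]
      abel
    · intro l hl hne
      rw [Finset.mem_Ico] at hl
      intro heq
      apply hne
      have h1l : (j : ℕ) ≤ l := hl.1
      have h2l' : l ≤ (i : ℕ) := by omega
      have heq' : (i : ℕ) + (j : ℕ) - l = l := heq
      rw [key l h1l h2l']
      have e3 : (i : ℕ) - l = l - (j : ℕ) := by omega
      rw [e3, hcomm _ (hvv (l - (j : ℕ))) _ (hstar _ (huu (l - (j : ℕ)))), sub_self]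
    · intro l hl
      rw [Finset.mem_Ico] at hl ⊢
      omega
    · intro l hl
      rw [Finset.mem_Ico] at hl
      try dsimp only
      omega
  rw [hsum, Finset.range_eq_Ico,
    ← Finset.sum_Ico_consecutive f (Nat.zero_le (j : ℕ)) (show (j : ℕ) ≤ n by omega),
    ← Finset.sum_Ico_consecutive f (show (j : ℕ) ≤ (i : ℕ) + 1 by omega)
      (show (i : ℕ) + 1 ≤ n from i.isLt),
    h1, h2, h3]
  abel

end NTAux

/-- `𝐀 = T(A,Ω) + 𝐀₀` is normal iff for all `1 ≤ s, k ≤ n-1`,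
`A_s A_k* + A_{n-s}* A_{n-k} = Ω_s Ω_k* + Ω_{n-s}* Ω_{n-k}`. -/
theorem normal_toeplitz_iff (n d : ℕ) (hn : 0 < n) (hd : 0 < d)
    (𝒜 : Subalgebra ℂ (Blk d)) (hcomm : ∀ a ∈ 𝒜, ∀ b ∈ 𝒜, a * b = b * a)
    (hstar : ∀ a ∈ 𝒜, aᴴ ∈ 𝒜)
    (A Ω : BlkVec n d)
    (hAmem : ∀ i, A i ∈ 𝒜) (hΩmem : ∀ i, Ω i ∈ 𝒜)
    (hA0 : A ⟨0, hn⟩ = 0) (hΩ0 : Ω ⟨0, hn⟩ = 0)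
    (A₀ : Blk d) (hA₀ : A₀ ∈ 𝒜)
    (Am : BlkMat n d) (hAm : Am = Tmat A Ω + Matrix.diagonal (fun _ => A₀)) :
    star Am * Am = Am * star Am ↔
      ∀ s k : ℕ, ∀ _hs1 : 1 ≤ s, ∀ _hs2 : s ≤ n - 1, ∀ _hk1 : 1 ≤ k, ∀ _hk2 : k ≤ n - 1,
        A ⟨s, by omega⟩ * (A ⟨k, by omega⟩)ᴴ
            + (A ⟨n - s, by omega⟩)ᴴ * A ⟨n - k, by omega⟩
          = Ω ⟨s, by omega⟩ * (Ω ⟨k, by omega⟩)ᴴ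
            + (Ω ⟨n - s, by omega⟩)ᴴ * Ω ⟨n - k, by omega⟩ := by
  subst hAm
  constructor
  · intro hnorm
    have hD0 : (Tmat A Ω + Matrix.diagonal fun _ => A₀) * star (Tmat A Ω + Matrix.diagonal fun _ => A₀)
        - star (Tmat A Ω + Matrix.diagonal fun _ => A₀) * (Tmat A Ω + Matrix.diagonal fun _ => A₀) = 0 :=
      sub_eq_zero_of_eq hnorm.symm
    have hpal : ∀ t r : ℕ, t + r ≤ n - 1 →
        NTAux.SS A Ω t (n - 1 - t - r) = NTAux.SS A Ω t r := by
      intro t r htr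
      have hi : r + t < n := by omega
      have hr : r < n := by omega
      have hform := NTAux.entry_formula hcomm hstar hAmem hΩmem hA₀
        (⟨r + t, hi⟩ : Fin n) (⟨r, hr⟩ : Fin n) (Nat.le_add_right r t)
      rw [hD0, Matrix.zero_apply] at hform
      have hform' : (0 : Blk d)
          = NTAux.SS A Ω (r + t - r) (n - 1 - (r + t)) - NTAux.SS A Ω (r + t - r) r := hform
      have e1 : r + t - r = t := by omega
      have e2 : n - 1 - (r + t) = n - 1 - t - r := by omega
      rw [e1, e2] at hform'
      exact sub_eq_zero.mp hform'.symm
    have hNCle : ∀ a b : ℕ, 1 ≤ a → a ≤ b → b ≤ n - 1 →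
        NTAux.qq A Ω a b + NTAux.qq A Ω (n - b) (n - a) = 0 := by
      intro a b ha hab hb
      set t := b - a with htdef
      have hstep1 : NTAux.SS A Ω t a = NTAux.SS A Ω t (a - 1) + NTAux.qq A Ω a b := by
        have h1 := NTAux.SS_succ A Ω t (a - 1)
        have e1 : a - 1 + 1 = a := by omega
        have e2 : a - 1 + 1 + t = b := by omega
        rw [e2, e1] at h1
        exact h1
      have hstep2 : NTAux.SS A Ω t (n - 1 - t - (a - 1))
          = NTAux.SS A Ω t (n - 1 - t - a) + NTAux.qq A Ω (n - b) (n - a) := by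
        have e1 : n - 1 - t - a + 1 = n - 1 - t - (a - 1) := by omega
        have e2 : n - 1 - t - a + 1 = n - b := by omega
        have e3 : n - 1 - t - a + 1 + t = n - a := by omega
        calc NTAux.SS A Ω t (n - 1 - t - (a - 1))
            = NTAux.SS A Ω t (n - 1 - t - a + 1) := by rw [e1]
          _ = NTAux.SS A Ω t (n - 1 - t - a)
              + NTAux.qq A Ω (n - 1 - t - a + 1) (n - 1 - t - a + 1 + t) :=
            NTAux.SS_succ A Ω t _
          _ = NTAux.SS A Ω t (n - 1 - t - a) + NTAux.qq A Ω (n - b) (n - a) := by rw [e3, e2]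
      have hp1 := hpal t a (by omega)
      have hp2 := hpal t (a - 1) (by omega)
      have hkey : NTAux.qq A Ω a b = - NTAux.qq A Ω (n - b) (n - a) := by
        have h1 : NTAux.qq A Ω a b = NTAux.SS A Ω t a - NTAux.SS A Ω t (a - 1) := by
          rw [hstep1]; abel
        rw [h1, ← hp1, ← hp2, hstep2]
        abel
      rw [hkey]
      exact neg_add_cancel _
    have hNC : ∀ a b : ℕ, 1 ≤ a → a ≤ n - 1 → 1 ≤ b → b ≤ n - 1 →
        NTAux.qq A Ω a b + NTAux.qq A Ω (n - b) (n - a) = 0 := by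
      intro a b ha ha' hb hb'
      rcases le_or_gt a b with hab | hab
      · exact hNCle a b ha hab hb'
      · have h0 := hNCle b a hb (le_of_lt hab) ha'
        have h1 := congrArg (fun X : Blk d => Xᴴ) h0
        simp only [Matrix.conjTranspose_add, NTAux.qq_star, Matrix.conjTranspose_zero] at h1
        exact h1
    intro s k hs1 hs2 hk1 hk2
    have hk' : k < n := by omega
    have hs' : s < n := by omega
    have hns : n - s < n := by omega
    have hnk : n - k < n := by omega
    have h0 := hNC k s hk1 hk2 hs1 hs2
    simp only [NTAux.qq] at h0
    rw [NTAux.av_apply A k hk', NTAux.av_apply Ω k hk', NTAux.av_apply A s hs',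
      NTAux.av_apply Ω s hs', NTAux.av_apply A (n - s) hns, NTAux.av_apply Ω (n - s) hns,
      NTAux.av_apply A (n - k) hnk, NTAux.av_apply Ω (n - k) hnk] at h0
    exact NTAux.solve1 (hcomm _ (hAmem _) _ (hstar _ (hAmem _)))
      (hcomm _ (hΩmem _) _ (hstar _ (hΩmem _))) h0
  · intro hE
    have hNC : ∀ a b : ℕ, 1 ≤ a → a ≤ n - 1 → 1 ≤ b → b ≤ n - 1 →
        NTAux.qq A Ω a b + NTAux.qq A Ω (n - b) (n - a) = 0 := by
      intro a b ha ha' hb hb'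
      have ha2 : a < n := by omega
      have hb2 : b < n := by omega
      have hna : n - a < n := by omega
      have hnb : n - b < n := by omega
      have h0 := hE b a hb hb' ha ha'
      simp only [NTAux.qq]
      rw [NTAux.av_apply A a ha2, NTAux.av_apply Ω a ha2, NTAux.av_apply A b hb2,
        NTAux.av_apply Ω b hb2, NTAux.av_apply A (n - a) hna, NTAux.av_apply Ω (n - a) hna,
        NTAux.av_apply A (n - b) hnb, NTAux.av_apply Ω (n - b) hnb]
      exact NTAux.solve2 (hcomm _ (hstar _ (hAmem _)) _ (hAmem _))
        (hcomm _ (hstar _ (hΩmem _)) _ (hΩmem _)) h0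
    have hrev : ∀ t r : ℕ, t + r ≤ n - 1 →
        NTAux.SS A Ω t (n - 1 - t) = NTAux.SS A Ω t r - NTAux.SS A Ω t (n - 1 - t - r) := by
      intro t r htr
      have hrR : r ≤ n - 1 - t := by omega
      have h1 : NTAux.SS A Ω t r
          + ∑ m ∈ Finset.Ico r (n - 1 - t), NTAux.qq A Ω (m + 1) (m + 1 + t)
          = NTAux.SS A Ω t (n - 1 - t) := by
        unfold NTAux.SS
        simp only [Finset.range_eq_Ico]
        exact Finset.sum_Ico_consecutive _ (Nat.zero_le r) hrR
      have h2 : ∑ m ∈ Finset.Ico r (n - 1 - t), NTAux.qq A Ω (m + 1) (m + 1 + t)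
          = -(NTAux.SS A Ω t (n - 1 - t - r)) := by
        rw [Finset.sum_Ico_eq_sum_range,
          ← Finset.sum_range_reflect (fun m => NTAux.qq A Ω (r + m + 1) (r + m + 1 + t))
            (n - 1 - t - r)]
        unfold NTAux.SS
        rw [← Finset.sum_neg_distrib]
        apply Finset.sum_congr rfl
        intro m hm
        have hm' : m < n - 1 - t - r := Finset.mem_range.mp hm
        try dsimp only
        have e1 : r + (n - 1 - t - r - 1 - m) + 1 = n - (m + 1 + t) := by omega
        have e2 : r + (n - 1 - t - r - 1 - m) + 1 + t = n - (m + 1) := by omega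
        rw [e2, e1]
        have h3 := hNC (m + 1) (m + 1 + t) (by omega) (by omega) (by omega) (by omega)
        rw [add_comm] at h3
        exact add_eq_zero_iff_eq_neg.mp h3
      rw [← h1, h2]
      abel
    have hzero : ∀ t : ℕ, t ≤ n - 1 → NTAux.SS A Ω t (n - 1 - t) = 0 := by
      intro t htn
      have h := hrev t 0 (by omega)
      rw [NTAux.SS_zero, Nat.sub_zero, zero_sub] at h
      have h2 : (2 : ℂ) • NTAux.SS A Ω t (n - 1 - t) = 0 := by
        rw [two_smul]
        nth_rewrite 2 [h]
        exact add_neg_cancel _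
      rcases smul_eq_zero.mp h2 with h3 | h3
      · exact absurd h3 (by norm_num)
      · exact h3
    have hpal : ∀ t r : ℕ, t + r ≤ n - 1 →
        NTAux.SS A Ω t (n - 1 - t - r) = NTAux.SS A Ω t r := by
      intro t r htr
      have h := hrev t r htr
      rw [hzero t (by omega)] at h
      exact (sub_eq_zero.mp h.symm).symm
    have hDle : ∀ i j : Fin n, (j : ℕ) ≤ (i : ℕ) →
        ((Tmat A Ω + Matrix.diagonal fun _ => A₀) * star (Tmat A Ω + Matrix.diagonal fun _ => A₀)
          - star (Tmat A Ω + Matrix.diagonal fun _ => A₀)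
            * (Tmat A Ω + Matrix.diagonal fun _ => A₀) : BlkMat n d) i j = 0 := by
      intro i j hij
      rw [NTAux.entry_formula hcomm hstar hAmem hΩmem hA₀ i j hij]
      have hi' := i.isLt
      have e1 : n - 1 - (i : ℕ) = n - 1 - ((i : ℕ) - (j : ℕ)) - (j : ℕ) := by omega
      rw [e1, hpal ((i : ℕ) - (j : ℕ)) (j : ℕ) (by omega), sub_self]
    have hD : (Tmat A Ω + Matrix.diagonal fun _ => A₀) * star (Tmat A Ω + Matrix.diagonal fun _ => A₀)
        - star (Tmat A Ω + Matrix.diagonal fun _ => A₀)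
          * (Tmat A Ω + Matrix.diagonal fun _ => A₀) = 0 := by
      apply Matrix.ext
      intro i j
      rw [Matrix.zero_apply]
      rcases le_or_gt (j : ℕ) (i : ℕ) with h | h
      · exact hDle i j h
      · have hst : star ((Tmat A Ω + Matrix.diagonal fun _ => A₀)
            * star (Tmat A Ω + Matrix.diagonal fun _ => A₀)
            - star (Tmat A Ω + Matrix.diagonal fun _ => A₀)
              * (Tmat A Ω + Matrix.diagonal fun _ => A₀))
            = (Tmat A Ω + Matrix.diagonal fun _ => A₀)
              * star (Tmat A Ω + Matrix.diagonal fun _ => A₀)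
              - star (Tmat A Ω + Matrix.diagonal fun _ => A₀)
                * (Tmat A Ω + Matrix.diagonal fun _ => A₀) := by
          rw [star_sub, Matrix.star_mul, Matrix.star_mul, star_star]
        have h0 := hDle j i (le_of_lt h)
        have h2 : ((Tmat A Ω + Matrix.diagonal fun _ => A₀)
              * star (Tmat A Ω + Matrix.diagonal fun _ => A₀)
            - star (Tmat A Ω + Matrix.diagonal fun _ => A₀)
              * (Tmat A Ω + Matrix.diagonal fun _ => A₀) : BlkMat n d) i j
            = (star ((Tmat A Ω + Matrix.diagonal fun _ => A₀)
              * star (Tmat A Ω + Matrix.diagonal fun _ => A₀)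
            - star (Tmat A Ω + Matrix.diagonal fun _ => A₀)
              * (Tmat A Ω + Matrix.diagonal fun _ => A₀)) : BlkMat n d) i j := by
          rw [hst]
        rw [h2, Matrix.star_apply, h0, star_zero]
    exact (sub_eq_zero.mp hD).symm
end
end

section
/- Fix a unitary X ∈ 𝒜′. If 𝐀 is a block Toeplitz matrix all of whose entries lie in 𝒜 and 𝐀 commutes with 𝐒_X (𝐀𝐒_X = 𝐒_X𝐀), then 𝐀 is normal. -/
open Matrix BigOperators

noncomputable section

theorem G2' {R : Type} [Ring R] (a b x : R) (hab : a * b = b * a) (hxa : x * a = a * x) :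
    a * (b * x) = (b * x) * a := by
  rw [← mul_assoc, hab, mul_assoc, ← hxa, ← mul_assoc]
theorem G3' {R : Type} [Ring R] (a b y : R) (hab : a * b = b * a) (hyb : y * b = b * y) :
    (y * a) * b = b * (y * a) := by
  rw [mul_assoc, hab, ← mul_assoc, hyb, mul_assoc]
theorem G6' {R : Type} [Ring R] (a b x y : R) (hab : a * b = b * a) (hxa : x * a = a * x)
    (hyb : y * b = b * y) (hu1 : y * x = 1) :
    (y * a) * (b * x) = b * a := by
  calc (y*a)*(b*x) = y * ((b*x)*a) := by rw [mul_assoc, G2' a b x hab hxa]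
    _ = ((y*b)*x)*a := by rw [← mul_assoc, ← mul_assoc]
    _ = (b*(y*x))*a := by rw [hyb]; simp only [mul_assoc]
    _ = b*a := by rw [hu1, mul_one]
theorem G6b' {R : Type} [Ring R] (a b x y : R) (hu2 : x * y = 1) :
    (b * x) * (y * a) = b * a := by
  rw [mul_assoc, ← mul_assoc x, hu2, one_mul]

/-- A block Toeplitz matrix with entries in `𝒜` that commutes with `𝐒_X` for a
unitary `X ∈ 𝒜′` is normal. -/
theorem normal_of_commutes_SX_unitary (n d : ℕ) (hn : 0 < n) (hd : 0 < d)
    (𝒜 : Subalgebra ℂ (Blk d)) (hcomm : ∀ a ∈ 𝒜, ∀ b ∈ 𝒜, a * b = b * a)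
    (hstar : ∀ a ∈ 𝒜, aᴴ ∈ 𝒜)
    (X : Blk d) (hX : ∀ a ∈ 𝒜, X * a = a * X)
    (hXunit : Xᴴ * X = 1 ∧ X * Xᴴ = 1)
    (A : BlkMat n d) (hAmem : ∀ i j, A i j ∈ 𝒜)
    (hA : IsBlockToeplitz A)
    (hAX : A * SX n d X = SX n d X * A) :
    star A * A = A * star A := by
  haveI : NeZero n := ⟨hn.ne'⟩
  obtain ⟨hu1, hu2⟩ := hXunit
  set z : Fin n := ⟨0, hn⟩ with hz
  set nl : Fin n := ⟨n - 1, by omega⟩ with hnl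
  -- Xᴴ commutes with 𝒜
  have hXH : ∀ a ∈ 𝒜, Xᴴ * a = a * Xᴴ := by
    intro a ha
    have h := hX aᴴ (hstar a ha)
    have h2 := congrArg conjTranspose h
    simpa [Matrix.conjTranspose_mul] using h2.symm
  -- the first-column coefficients
  set c : ℕ → Blk d := fun m => if h : m < n then A ⟨m, h⟩ z else 0 with hcdef
  have hcmem : ∀ m, c m ∈ 𝒜 := by
    intro m
    simp only [hcdef]
    by_cases h : m < n
    · rw [dif_pos h]; exact hAmem _ _
    · rw [dif_neg h]; exact zero_mem _
  -- commuting helpers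
  have hCS : ∀ p q, (c p)ᴴ * c q = c q * (c p)ᴴ :=
    fun p q => hcomm _ (hstar _ (hcmem p)) _ (hcmem q)
  have hXC : ∀ p, X * c p = c p * X := fun p => hX _ (hcmem p)
  have hXCs : ∀ p, X * (c p)ᴴ = (c p)ᴴ * X := fun p => hX _ (hstar _ (hcmem p))
  have hXsC : ∀ p, Xᴴ * c p = c p * Xᴴ := fun p => hXH _ (hcmem p)
  have hXsCs : ∀ p, Xᴴ * (c p)ᴴ = (c p)ᴴ * Xᴴ := fun p => hXH _ (hstar _ (hcmem p))
  -- the wrap-around relation from hAX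
  have hw : ∀ i : Fin n, 0 < i.val → A i z * X = A ⟨i.val - 1, by omega⟩ nl := by
    intro i hi
    have h := congrFun (congrFun hAX i) nl
    have hL : (A * SX n d X) i nl = A i z * X := by
      rw [Matrix.mul_apply]
      rw [Finset.sum_eq_single z]
      · congr 1
        show (if (z:ℕ) = (nl:ℕ) + 1 then (1 : Blk d)
          else if (z:ℕ) = 0 ∧ (nl:ℕ) = n - 1 then X else 0) = X
        rw [if_neg (by simp only [hz, hnl]; omega), if_pos ⟨rfl, rfl⟩]
      · intro b _ hb
        have hb0 : (b : ℕ) ≠ 0 := fun hh => hb (Fin.ext hh)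
        have : SX n d X b nl = 0 := by
          show (if (b:ℕ) = (nl:ℕ) + 1 then (1 : Blk d)
            else if (b:ℕ) = 0 ∧ (nl:ℕ) = n - 1 then X else 0) = 0
          rw [if_neg (by simp only [hnl]; omega), if_neg (fun hc => hb0 hc.1)]
        rw [this, mul_zero]
      · intro h; exact absurd (Finset.mem_univ z) h
    have hR : (SX n d X * A) i nl = A ⟨i.val - 1, by omega⟩ nl := by
      rw [Matrix.mul_apply]
      rw [Finset.sum_eq_single (⟨i.val - 1, by omega⟩ : Fin n)]
      · have : SX n d X i ⟨i.val - 1, by omega⟩ = 1 := by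
          show (if (i:ℕ) = (i.val - 1) + 1 then (1 : Blk d)
            else if (i:ℕ) = 0 ∧ (i.val - 1 : ℕ) = n - 1 then X else 0) = 1
          rw [if_pos (by omega)]
        rw [this, one_mul]
      · intro b _ hb
        have hb0 : (b : ℕ) ≠ i.val - 1 := fun hh => hb (Fin.ext hh)
        have : SX n d X i b = 0 := by
          show (if (i:ℕ) = (b:ℕ) + 1 then (1 : Blk d)
            else if (i:ℕ) = 0 ∧ (b:ℕ) = n - 1 then X else 0) = 0
          rw [if_neg (by omega), if_neg (fun hc => by omega)]
        rw [this, zero_mul]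
      · intro h; exact absurd (Finset.mem_univ _) h
    rw [← hL, h, hR]
  -- entry formulas
  have E1 : ∀ i j : Fin n, (j:ℕ) ≤ (i:ℕ) → A i j = c ((i:ℕ) - (j:ℕ)) := by
    intro i j hij
    have hlt : (i:ℕ) - (j:ℕ) < n := by omega
    have := hA i j ⟨(i:ℕ) - (j:ℕ), hlt⟩ z (by simp [hz]; omega)
    rw [this]
    simp only [hcdef]; rw [dif_pos hlt]
  have E2 : ∀ i j : Fin n, (i:ℕ) < (j:ℕ) → A i j = c (n - ((j:ℕ) - (i:ℕ))) * X := by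
    intro i j hij
    have hm1 : 1 ≤ (j:ℕ) - (i:ℕ) := by omega
    have hm2 : (j:ℕ) - (i:ℕ) < n := by omega
    have h1 : A i j = A z ⟨(j:ℕ) - (i:ℕ), hm2⟩ := hA _ _ _ _ (by simp [hz]; omega)
    have h3 := hw ⟨n - ((j:ℕ) - (i:ℕ)), by omega⟩ (by simp; omega)
    have h2 : A ⟨n - ((j:ℕ) - (i:ℕ)) - 1, by omega⟩ nl = A z ⟨(j:ℕ) - (i:ℕ), hm2⟩ :=
      hA _ _ _ _ (by simp [hz, hnl]; omega)
    rw [h1, ← h2, ← h3]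
    congr 1
    simp only [hcdef]; rw [dif_pos (by omega : n - ((j:ℕ) - (i:ℕ)) < n)]
  -- main computation
  refine Matrix.ext fun i j => ?_
  rw [Matrix.mul_apply, Matrix.mul_apply]
  have hinv : Function.Involutive (fun k : Fin n => i + j - k) := fun k => sub_sub_cancel _ _
  refine Fintype.sum_equiv hinv.toPerm (fun k => star A i k * A k j)
    (fun k => A i k * star A k j) ?_
  intro k
  simp only [Function.Involutive.coe_toPerm, Matrix.star_apply, Matrix.star_eq_conjTranspose]
  set k' : Fin n := i + j - k with hk'
  have key : (k' : ℕ) = (n - (k:ℕ) + ((i:ℕ) + (j:ℕ))) % n := by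
    simp [hk', Fin.sub_def, Fin.add_def, Nat.add_mod_mod]
  have hmodv : ∀ V : ℕ, V < n → (∃ t, n - (k:ℕ) + ((i:ℕ) + (j:ℕ)) = V + t * n) →
      (k' : ℕ) = V := by
    rintro V hV ⟨t, ht⟩
    rw [key, ht, Nat.add_mul_mod_self_right]
    exact Nat.mod_eq_of_lt hV
  rcases lt_or_ge (k:ℕ) (i:ℕ) with hki | hki <;> rcases lt_or_ge (k:ℕ) (j:ℕ) with hkj | hkj
  · -- k < i, k < j : case 4
    rw [E2 k i hki, E2 k j hkj]
    rcases lt_or_ge ((i:ℕ) + (j:ℕ) - (k:ℕ)) n with h4 | h4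
    · have hV : (k' : ℕ) = (i:ℕ) + (j:ℕ) - (k:ℕ) := hmodv _ h4 ⟨1, by omega⟩
      rw [E2 i k' (by omega), E2 j k' (by omega), hV]
      rw [show n - ((i:ℕ) + (j:ℕ) - (k:ℕ) - (i:ℕ)) = n - ((j:ℕ) - (k:ℕ)) from by omega,
          show n - ((i:ℕ) + (j:ℕ) - (k:ℕ) - (j:ℕ)) = n - ((i:ℕ) - (k:ℕ)) from by omega]
      rw [Matrix.conjTranspose_mul]
      exact (G6' _ _ _ _ (hCS _ _) (hXCs _) (hXsC _) hu1).trans (G6b' _ _ _ _ hu2).symm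
    · have hV : (k' : ℕ) = (i:ℕ) + (j:ℕ) - (k:ℕ) - n := hmodv _ (by omega) ⟨2, by omega⟩
      rw [E1 i k' (by omega), E1 j k' (by omega), hV]
      rw [show (i:ℕ) - ((i:ℕ) + (j:ℕ) - (k:ℕ) - n) = n - ((j:ℕ) - (k:ℕ)) from by omega,
          show (j:ℕ) - ((i:ℕ) + (j:ℕ) - (k:ℕ) - n) = n - ((i:ℕ) - (k:ℕ)) from by omega]
      rw [Matrix.conjTranspose_mul]
      exact G6' _ _ _ _ (hCS _ _) (hXCs _) (hXsC _) hu1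
  · -- k < i, j ≤ k : case 3
    rw [E2 k i hki, E1 k j hkj]
    have hV : (k' : ℕ) = (i:ℕ) + (j:ℕ) - (k:ℕ) := hmodv _ (by omega) ⟨1, by omega⟩
    rw [E1 i k' (by omega), E2 j k' (by omega), hV]
    rw [show (i:ℕ) - ((i:ℕ) + (j:ℕ) - (k:ℕ)) = (k:ℕ) - (j:ℕ) from by omega,
        show n - ((i:ℕ) + (j:ℕ) - (k:ℕ) - (j:ℕ)) = n - ((i:ℕ) - (k:ℕ)) from by omega]
    rw [Matrix.conjTranspose_mul]
    exact G3' _ _ _ (hCS _ _) (hXsC _)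
  · -- i ≤ k, k < j : case 2
    rw [E1 k i hki, E2 k j hkj]
    have hV : (k' : ℕ) = (i:ℕ) + (j:ℕ) - (k:ℕ) := hmodv _ (by omega) ⟨1, by omega⟩
    rw [E2 i k' (by omega), E1 j k' (by omega), hV]
    rw [show n - ((i:ℕ) + (j:ℕ) - (k:ℕ) - (i:ℕ)) = n - ((j:ℕ) - (k:ℕ)) from by omega,
        show (j:ℕ) - ((i:ℕ) + (j:ℕ) - (k:ℕ)) = (k:ℕ) - (i:ℕ) from by omega]
    exact G2' _ _ _ (hCS _ _) (hXCs _)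
  · -- i ≤ k, j ≤ k : case 1
    rw [E1 k i hki, E1 k j hkj]
    rcases le_or_gt (k:ℕ) ((i:ℕ) + (j:ℕ)) with h1 | h1
    · have hV : (k' : ℕ) = (i:ℕ) + (j:ℕ) - (k:ℕ) := hmodv _ (by omega) ⟨1, by omega⟩
      rw [E1 i k' (by omega), E1 j k' (by omega), hV]
      rw [show (i:ℕ) - ((i:ℕ) + (j:ℕ) - (k:ℕ)) = (k:ℕ) - (j:ℕ) from by omega,
          show (j:ℕ) - ((i:ℕ) + (j:ℕ) - (k:ℕ)) = (k:ℕ) - (i:ℕ) from by omega]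
      exact hCS _ _
    · have hV : (k' : ℕ) = (i:ℕ) + (j:ℕ) + n - (k:ℕ) := hmodv _ (by omega) ⟨0, by omega⟩
      rw [E2 i k' (by omega), E2 j k' (by omega), hV]
      rw [show n - ((i:ℕ) + (j:ℕ) + n - (k:ℕ) - (i:ℕ)) = (k:ℕ) - (j:ℕ) from by omega,
          show n - ((i:ℕ) + (j:ℕ) + n - (k:ℕ) - (j:ℕ)) = (k:ℕ) - (i:ℕ) from by omega]
      rw [Matrix.conjTranspose_mul]
      exact (hCS _ _).trans (G6b' _ _ _ _ hu2).symm
end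
end
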